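/- arXiv:0804.0433 — 7 statements merged into one kernel-verified Lean document; each statement's English description precedes it below -/
import Mathlib

section
/- Let a be a finite-dimensional real inner product space, R a reduced root system in the dual a* with basis Π. Define a^{*+} = {x ∈ a* : ⟨x, α^∨⟩ ≥ 0 for all α ∈ Π}. Then the antidual cone {λ ∈ a : ⟨x, λ⟩ ≤ 0 for all x ∈ a^{*+}} equals the set of nonpositive linear combinations {Σ_{α∈Π} λ_α α^∨ : λ_α ≤ 0}. -/
/-!
A vector `λ` in the antidual of the chamber is orthogonal to every `x ⊥ span {α^∨}`, since both
`x` and `-x` lie in the chamber; hence `λ` lies in the span of the simple coroots. These are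
linearly independent, so each has a dual vector in their span (pairing to `1` with it and to `0`
with the others); it lies in the chamber, and pairing it with `λ = ∑ λ_α α^∨` gives `λ_α ≤ 0`.
-/

open scoped RealInnerProductSpace

noncomputable section

variable {E : Type*} [NormedAddCommGroup E] [InnerProductSpace ℝ E] [FiniteDimensional ℝ E]

/-- The coroot `α^∨ = 2α/⟨α,α⟩`. -/
def coroot (α : E) : E := (2 / ⟪α, α⟫) • α

section

variable {F ι : Type*} [NormedAddCommGroup F] [InnerProductSpace ℝ F] {v : ι → F} {s : Finset ι}

theorem Submodule.mem_of_forall_mem_orthogonal_inner_nonpos (K : Submodule ℝ F)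
    [K.HasOrthogonalProjection] {y : F} (h : ∀ x ∈ Kᗮ, ⟪x, y⟫ ≤ 0) : y ∈ K := by
  rw [← K.orthogonal_orthogonal, Submodule.mem_orthogonal]
  intro x hx
  exact le_antisymm (h x hx) (by simpa [inner_neg_left] using h (-x) (neg_mem hx))

theorem LinearIndepOn.exists_dual_vector (hv : LinearIndepOn ℝ v s) {i : ι} (hi : i ∈ s) :
    ∃ w : F, ⟪w, v i⟫ = 1 ∧ ∀ j ∈ s, j ≠ i → ⟪w, v j⟫ = 0 := by
  have : FiniteDimensional ℝ (Submodule.span ℝ (Set.range fun j : s => v j)) :=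
    FiniteDimensional.span_of_finite ℝ (Set.finite_range _)
  let b := Module.Basis.span hv
  let w := (InnerProductSpace.toDual ℝ _).symm (b.coord ⟨i, hi⟩).toContinuousLinearMap
  have inner_w (j : ι) (hj : j ∈ s) : ⟪(w : F), v j⟫ = b.coord ⟨i, hi⟩ (b ⟨j, hj⟩) := by
    have hb : (b ⟨j, hj⟩ : F) = v j := congrArg Subtype.val (Module.Basis.span_apply hv _)
    rw [← hb, ← Submodule.coe_inner, InnerProductSpace.toDual_symm_apply]
    rfl
  refine ⟨w, by simp [inner_w i hi], fun j hj hji => ?_⟩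
  simp [inner_w j hj, hji]

theorem Submodule.mem_span_image_of_forall_inner_nonpos {y : F}
    (hy : ∀ x, (∀ i ∈ s, 0 ≤ ⟪x, v i⟫) → ⟪x, y⟫ ≤ 0) : y ∈ Submodule.span ℝ (v '' s) := by
  have : FiniteDimensional ℝ (Submodule.span ℝ (v '' s)) :=
    FiniteDimensional.span_of_finite ℝ (s.finite_toSet.image v)
  refine Submodule.mem_of_forall_mem_orthogonal_inner_nonpos _ fun x hx => hy x fun i hi => ?_
  exact (Submodule.inner_left_of_mem_orthogonal
    (Submodule.subset_span (Set.mem_image_of_mem v hi)) hx).ge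

theorem LinearIndepOn.forall_inner_nonpos_iff (hv : LinearIndepOn ℝ v s) (y : F) :
    (∀ x, (∀ i ∈ s, 0 ≤ ⟪x, v i⟫) → ⟪x, y⟫ ≤ 0) ↔
      ∃ c : ι → ℝ, (∀ i ∈ s, c i ≤ 0) ∧ y = ∑ i ∈ s, c i • v i := by
  constructor
  · intro hy
    obtain ⟨c, hc, rfl⟩ := (Finsupp.mem_span_image_iff_linearCombination ℝ).1
      (Submodule.mem_span_image_of_forall_inner_nonpos hy)
    rw [Finsupp.linearCombination_apply_of_mem_supported ℝ hc] at hy ⊢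
    refine ⟨c, fun i hi => ?_, rfl⟩
    obtain ⟨w, hwi, hwj⟩ := hv.exists_dual_vector hi
    calc c i = ⟪w, ∑ j ∈ s, c j • v j⟫ := by
          rw [inner_sum, Finset.sum_eq_single_of_mem i hi fun j hj hji => by
            rw [real_inner_smul_right, hwj j hj hji, mul_zero], real_inner_smul_right, hwi, mul_one]
      _ ≤ 0 := hy w fun j hj => by
          rcases eq_or_ne j i with rfl | hji
          · rw [hwi]; exact zero_le_one
          · rw [hwj j hj hji]
  · rintro ⟨c, hc, rfl⟩ x hx
    rw [inner_sum]
    refine Finset.sum_nonpos fun i hi => ?_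
    rw [real_inner_smul_right]
    exact mul_nonpos_of_nonpos_of_nonneg (hc i hi) (hx i hi)

theorem LinearIndepOn.coroot {t : Set F} (ht : LinearIndepOn ℝ id t) :
    LinearIndepOn ℝ coroot t := by
  have hscale (α : t) : 2 / ⟪(α : F), α⟫ ≠ 0 :=
    div_ne_zero two_ne_zero (inner_self_ne_zero.2 (ht.ne_zero α.2))
  exact ht.units_smul fun α => Units.mk0 _ (hscale α)

end

theorem stmt2_general
    (Pi : Finset E)
    (hindep : LinearIndependent ℝ (fun x : {x // x ∈ Pi} => (x : E))) :
    {lam : E | ∀ x : E, (∀ α ∈ Pi, 0 ≤ ⟪x, coroot α⟫) → ⟪x, lam⟫ ≤ 0}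
    = {lam : E | ∃ c : E → ℝ, (∀ α ∈ Pi, c α ≤ 0) ∧ lam = ∑ α ∈ Pi, c α • coroot α} :=
  Set.ext fun lam => (LinearIndepOn.coroot hindep).forall_inner_nonpos_iff lam

theorem stmt2
    (R Pi : Finset E) (hPiR : ↑Pi ⊆ (R : Set E)) (h0 : (0 : E) ∉ R)
    (hred : ∀ β ∈ R, ∀ t : ℝ, t • β ∈ R → t = 1 ∨ t = -1)
    (hcrys : ∀ α ∈ R, ∀ β ∈ R, ∃ n : ℤ, ⟪β, coroot α⟫ = (n : ℝ))
    (hbasis : ∀ β ∈ R, (∃ c : E → ℝ, (∀ α, 0 ≤ c α) ∧ β = ∑ α ∈ Pi, c α • α) ∨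
                       (∃ c : E → ℝ, (∀ α, c α ≤ 0) ∧ β = ∑ α ∈ Pi, c α • α))
    (hindep : LinearIndependent ℝ (fun x : {x // x ∈ Pi} => (x : E))) :
    {lam : E | ∀ x : E, (∀ α ∈ Pi, 0 ≤ ⟪x, coroot α⟫) → ⟪x, lam⟫ ≤ 0}
    = {lam : E | ∃ c : E → ℝ, (∀ α ∈ Pi, c α ≤ 0) ∧ lam = ∑ α ∈ Pi, c α • coroot α} :=
  stmt2_general Pi hindep

end
end

section
/- Let W be the Weyl group of a root system R with basis Π, P ⊆ Π, and W^P the set of minimal length representatives of W/W_P. For λ ∈ a, if ⟨x, w(λ)⟩ ≤ 0 for all x in the dominant cone a^{*+} and all w ∈ W^P, then λ lies in the cone a_P^- = {Σ_{α∈P} λ_α α^∨ : λ_α ≤ 0}; conversely every element of a_P^- satisfies this condition. -/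
/-!
STATEMENT 3: For λ ∈ a: ⟨x, w(λ)⟩ ≤ 0 for all x in the dominant cone a^{*+} and all
w ∈ W^P = {w ∈ W : w(P) ⊂ R⁺}, if and only if λ lies in the cone
a_P^- = {Σ_{α∈P} λ_α α^∨ : λ_α ≤ 0}.
-/

open scoped RealInnerProductSpace

noncomputable section

variable {E : Type*} [NormedAddCommGroup E] [InnerProductSpace ℝ E] [FiniteDimensional ℝ E]

/-- The positive roots: roots which are nonnegative combinations of Π. -/
def posRoots (R Pi : Finset E) : Set E :=
  {β | β ∈ R ∧ ∃ c : E → ℝ, (∀ α, 0 ≤ c α) ∧ β = ∑ α ∈ Pi, c α • α}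

/-!
For `λ ∈ a_P^-` and `w ∈ W^P`, each `w(α^∨)`, `α ∈ P`, is a positive multiple of a positive root,
so it pairs nonnegatively with a dominant `x`.

Conversely, testing the hypothesis with `w = 1` and `x ⊥ Π` forces `λ ∈ span Π`, and with the
vectors `ϖ_γ` of `span Π` dual to `Π` (which are dominant) shows that every coordinate
`⟪ϖ_γ, λ⟫` is `≤ 0`. For `α ∉ P` the vector `-ϖ_α` is fixed by `W_P`. Pick `ρ` with `⟪ρ, Π⟫ > 0`,
let `σ` be the sum of the positive roots and choose `w ∈ W` maximizing
`(⟪ρ, w(-ϖ_α)⟫, ⟪ρ, w σ⟫)` lexicographically. Maximality in the first coordinate makes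
`w(-ϖ_α)` dominant; since `s_β σ = σ - 2β` for simple `β` and `s_β` fixes `-ϖ_α` for `β ∈ P`,
maximality in the second makes `w(P) ⊆ R⁺`. The hypothesis for this pair gives `⟪ϖ_α, λ⟫ ≥ 0`,
so `λ` is supported on `P`.
-/

namespace RootCone

open Submodule Finset

variable {V : Type*} [NormedAddCommGroup V] [InnerProductSpace ℝ V]

theorem inner_coroot (x γ : V) : ⟪x, coroot γ⟫ = 2 / ⟪γ, γ⟫ * ⟪x, γ⟫ :=
  real_inner_smul_right _ _ _

theorem inner_coroot_self {γ : V} (hγ : γ ≠ 0) : ⟪γ, coroot γ⟫ = 2 := by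
  rw [inner_coroot]
  field_simp [(real_inner_self_pos.2 hγ).ne']

theorem smul_coroot {γ : V} (hγ : γ ≠ 0) : (⟪γ, γ⟫ / 2) • coroot γ = γ := by
  rw [coroot, smul_smul, div_mul_div_comm, mul_comm, div_self, one_smul]
  simpa using (real_inner_self_pos.2 hγ).ne'

theorem inner_nonneg_of_inner_coroot_nonneg {x γ : V} (h : 0 ≤ ⟪x, coroot γ⟫) :
    0 ≤ ⟪x, γ⟫ := by
  rcases eq_or_ne γ 0 with rfl | hγ
  · simp
  rw [inner_coroot] at h
  exact (mul_nonneg_iff_of_pos_left (div_pos two_pos (real_inner_self_pos.2 hγ))).1 h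

theorem inner_reflection_reflection {α : V} (hα : α ≠ 0) (x y : V) :
    ⟪x - ⟪x, coroot α⟫ • α, y - ⟪y, coroot α⟫ • α⟫ = ⟪x, y⟫ := by
  have := (real_inner_self_pos.2 hα).ne'
  simp only [inner_sub_left, inner_sub_right, real_inner_smul_left, real_inner_smul_right,
    inner_coroot, real_inner_comm α x, real_inner_comm α y]
  field_simp
  ring

theorem mem_of_forall_inner_nonpos (K : Submodule ℝ V) [K.HasOrthogonalProjection] {v : V}
    (h : ∀ x ∈ Kᗮ, ⟪x, v⟫ ≤ 0) : v ∈ K := by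
  rw [← K.orthogonal_orthogonal, mem_orthogonal]
  intro x hx
  exact le_antisymm (h x hx) (by simpa using h (-x) (neg_mem hx))

theorem inner_sum_smul_pos {S : Finset V} {x : V} (hx : ∀ γ ∈ S, 0 < ⟪x, γ⟫) {c : V → ℝ}
    (hc : ∀ γ, 0 ≤ c γ) (hne : ∑ γ ∈ S, c γ • γ ≠ 0) : 0 < ⟪x, ∑ γ ∈ S, c γ • γ⟫ := by
  obtain ⟨γ, hγ, hcγ⟩ : ∃ γ ∈ S, c γ ≠ 0 := by
    by_contra! h
    exact hne (sum_eq_zero fun γ hγ => by rw [h γ hγ, zero_smul])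
  rw [inner_sum]
  refine sum_pos' (fun δ hδ => ?_) ⟨γ, hγ, ?_⟩
  · rw [real_inner_smul_right]
    exact mul_nonneg (hc δ) (hx δ hδ).le
  · rw [real_inner_smul_right]
    exact mul_pos ((hc γ).lt_of_ne hcγ.symm) (hx γ hγ)

theorem sum_apply_of_mapsTo_erase {M : Type*} [AddCommGroup M] [DecidableEq M] (f : M ≃+ M)
    {T : Finset M} {β : M} (hβ : β ∈ T) (hf : ∀ γ ∈ T.erase β, f γ ∈ T.erase β)
    (hfβ : f β = -β) : f (∑ γ ∈ T, γ) = ∑ γ ∈ T, γ - 2 • β := by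
  have hperm : (T.erase β).map f.toEquiv.toEmbedding = T.erase β :=
    map_eq_of_subset fun _ h => by
      obtain ⟨γ, hγ, rfl⟩ := mem_map.1 h
      exact hf γ hγ
  have hsum : ∑ γ ∈ T.erase β, f γ = ∑ γ ∈ T.erase β, γ := by
    conv_rhs => rw [← hperm, sum_map]
    rfl
  rw [map_sum, ← add_sum_erase T _ hβ, ← add_sum_erase T _ hβ, hsum, hfβ]
  abel

def IsDominant (Pi : Finset V) (x : V) : Prop :=
  ∀ α ∈ Pi, 0 ≤ ⟪x, coroot α⟫

theorem isDominant_of_mem_orthogonal {Pi : Finset V} {x : V}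
    (hx : x ∈ (span ℝ (Pi : Set V))ᗮ) : IsDominant Pi x := fun α hα => by
  rw [inner_coroot, inner_left_of_mem_orthogonal (subset_span hα) hx, mul_zero]

theorem IsDominant.inner_nonneg_of_mem_posRoots {R Pi : Finset V} {x β : V}
    (hx : IsDominant Pi x) (hβ : β ∈ posRoots R Pi) : 0 ≤ ⟪x, β⟫ := by
  obtain ⟨-, c, hc, rfl⟩ := hβ
  rw [inner_sum]
  exact sum_nonneg fun γ hγ => by
    rw [real_inner_smul_right]
    exact mul_nonneg (hc γ) (inner_nonneg_of_inner_coroot_nonneg (hx γ hγ))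

theorem mem_posRoots_of_mem {R Pi : Finset V} (hPiR : ↑Pi ⊆ (R : Set V)) {α : V}
    (hα : α ∈ Pi) : α ∈ posRoots R Pi := by
  classical
  exact ⟨hPiR hα, fun γ => if γ = α then 1 else 0, fun γ => by positivity,
    by simp [hα]⟩

section DualVector

variable [DecidableEq V]

def dualVector (S : Finset V) (γ : V) : V :=
  let v := γ - (span ℝ (S.erase γ : Set V)).starProjection γ
  ⟪v, v⟫⁻¹ • v

variable {S : Finset V} {γ : V}

theorem dualVector_mem_span (hγ : γ ∈ S) : dualVector S γ ∈ span ℝ (S : Set V) :=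
  smul_mem _ _ (sub_mem (subset_span hγ)
    (span_mono (by simp) (starProjection_apply_mem _ γ)))

theorem inner_dualVector_self (hS : LinearIndepOn ℝ id (S : Set V)) (hγ : γ ∈ S) :
    ⟪dualVector S γ, γ⟫ = 1 := by
  set U := span ℝ (S.erase γ : Set V)
  have hγU : γ ∉ U := by
    simpa [U, Finset.coe_erase] using hS.notMem_span hγ
  have hne : γ - U.starProjection γ ≠ 0 := by
    rwa [sub_ne_zero, ne_comm, Ne, starProjection_eq_self_iff]
  have hproj : ⟪γ - U.starProjection γ, U.starProjection γ⟫ = 0 :=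
    inner_left_of_mem_orthogonal (starProjection_apply_mem _ γ)
      (sub_starProjection_mem_orthogonal γ)
  rw [dualVector, real_inner_smul_left,
    show ⟪γ - U.starProjection γ, γ⟫ = ⟪γ - U.starProjection γ, γ - U.starProjection γ⟫ by
      rw [inner_sub_right, hproj, sub_zero]]
  exact inv_mul_cancel₀ (real_inner_self_pos.2 hne).ne'

theorem inner_dualVector_of_ne {δ : V} (hδ : δ ∈ S) (hδγ : δ ≠ γ) :
    ⟪dualVector S γ, δ⟫ = 0 := by
  rw [dualVector, real_inner_smul_left,
    inner_left_of_mem_orthogonal (subset_span (mem_coe.2 (mem_erase.2 ⟨hδγ, hδ⟩)))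
      (sub_starProjection_mem_orthogonal γ), mul_zero]

theorem inner_dualVector_sum (hS : LinearIndepOn ℝ id (S : Set V)) (hγ : γ ∈ S) (c : V → ℝ) :
    ⟪dualVector S γ, ∑ δ ∈ S, c δ • δ⟫ = c γ := by
  rw [inner_sum, Finset.sum_eq_single_of_mem γ hγ fun δ hδ hδγ => by
    rw [real_inner_smul_right, inner_dualVector_of_ne hδ hδγ, mul_zero]]
  rw [real_inner_smul_right, inner_dualVector_self hS hγ, mul_one]

theorem eq_sum_inner_dualVector_smul (hS : LinearIndepOn ℝ id (S : Set V)) {v : V}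
    (hv : v ∈ span ℝ (S : Set V)) : v = ∑ γ ∈ S, ⟪dualVector S γ, v⟫ • γ := by
  obtain ⟨c, -, rfl⟩ := mem_span_finset.1 hv
  exact Finset.sum_congr rfl fun γ hγ => by rw [inner_dualVector_sum hS hγ]

theorem isDominant_dualVector (hS : LinearIndepOn ℝ id (S : Set V)) (hγ : γ ∈ S) :
    IsDominant S (dualVector S γ) := by
  intro δ hδ
  rw [inner_coroot]
  rcases eq_or_ne δ γ with rfl | hδγ
  · rw [inner_dualVector_self hS hδ, mul_one]
    exact div_nonneg zero_le_two real_inner_self_nonneg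
  · rw [inner_dualVector_of_ne hδ hδγ, mul_zero]

theorem exists_inner_pos (hS : LinearIndepOn ℝ id (S : Set V)) :
    ∃ ρ : V, ∀ γ ∈ S, 0 < ⟪ρ, γ⟫ := by
  refine ⟨∑ δ ∈ S, dualVector S δ, fun γ hγ => ?_⟩
  rw [sum_inner, sum_eq_single_of_mem γ hγ fun δ _ hδγ => inner_dualVector_of_ne hγ hδγ.symm,
    inner_dualVector_self hS hγ]
  exact one_pos

end DualVector

def weylGroup (s : V → V ≃ₗ[ℝ] V) (Pi : Finset V) : Subgroup (V ≃ₗ[ℝ] V) :=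
  Subgroup.closure (s '' Pi)

variable {s : V → V ≃ₗ[ℝ] V} {R Pi : Finset V}

theorem inner_map_map_of_mem_weylGroup (hPi0 : (0 : V) ∉ Pi)
    (hs : ∀ α ∈ Pi, ∀ x : V, s α x = x - ⟪x, coroot α⟫ • α) {w : V ≃ₗ[ℝ] V}
    (hw : w ∈ weylGroup s Pi) (x y : V) : ⟪w x, w y⟫ = ⟪x, y⟫ := by
  induction hw using Subgroup.closure_induction generalizing x y with
  | mem _ hw =>
    obtain ⟨α, hα, rfl⟩ := hw
    rw [hs α hα, hs α hα]
    exact inner_reflection_reflection (ne_of_mem_of_not_mem hα hPi0) x y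
  | one => rfl
  | mul a b _ _ ha hb => exact (ha (b x) (b y)).trans (hb x y)
  | inv a _ ha => rw [← ha]; exact congr_arg₂ _ (a.apply_symm_apply x) (a.apply_symm_apply y)

open Pointwise in
theorem map_mem_of_mem_weylGroup (hsR : ∀ α ∈ Pi, ∀ β ∈ R, s α β ∈ R) {w : V ≃ₗ[ℝ] V}
    (hw : w ∈ weylGroup s Pi) {β : V} (hβ : β ∈ R) : w β ∈ R := by
  have hstab : weylGroup s Pi ≤ MulAction.stabilizer (V ≃ₗ[ℝ] V) (R : Set V) := by
    refine Subgroup.closure_le _ |>.2 ?_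
    rintro _ ⟨α, hα, rfl⟩
    exact Set.map_eq_of_subset (f := (s α).toEquiv.toEmbedding)
      (Set.image_subset_iff.2 fun β hβ => hsR α hα β hβ) R.finite_toSet
  have := Set.smul_mem_smul_set (a := w) (Finset.mem_coe.2 hβ)
  rwa [MulAction.mem_stabilizer_iff.1 (hstab hw)] at this

theorem finite_orbit_of_mem_span (hPiR : ↑Pi ⊆ (R : Set V))
    (hsR : ∀ α ∈ Pi, ∀ β ∈ R, s α β ∈ R) {z : V} (hz : z ∈ span ℝ (Pi : Set V)) :
    ((fun w : V ≃ₗ[ℝ] V => w z) '' weylGroup s Pi).Finite := by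
  obtain ⟨m, -, rfl⟩ := mem_span_finset.1 hz
  refine (Set.finite_range fun f : Pi → R => ∑ γ ∈ Pi.attach, m γ • (f γ : V)).subset ?_
  rintro _ ⟨w, hw, rfl⟩
  refine ⟨fun γ => ⟨w γ, map_mem_of_mem_weylGroup hsR hw (hPiR γ.2)⟩, ?_⟩
  simp only [map_sum, map_smul]
  exact Finset.sum_attach Pi fun γ => m γ • w γ

theorem apply_eq_self_of_inner_eq_zero
    (hs : ∀ α ∈ Pi, ∀ x : V, s α x = x - ⟪x, coroot α⟫ • α) {β x : V} (hβ : β ∈ Pi)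
    (hx : ⟪x, β⟫ = 0) : s β x = x := by
  rw [hs β hβ, inner_coroot, hx, mul_zero, zero_smul, sub_zero]

theorem isDominant_of_inner_reflection_le
    (hs : ∀ α ∈ Pi, ∀ x : V, s α x = x - ⟪x, coroot α⟫ • α) {ρ : V}
    (hρ : ∀ γ ∈ Pi, 0 < ⟪ρ, γ⟫) {x : V} (hx : ∀ δ ∈ Pi, ⟪ρ, s δ x⟫ ≤ ⟪ρ, x⟫) :
    IsDominant Pi x := fun δ hδ => by
  have := hx δ hδ
  rw [hs δ hδ, inner_sub_right, real_inner_smul_right] at this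
  exact nonneg_of_mul_nonneg_left (by linarith) (hρ δ hδ)

structure IsSimpleSystem (R Pi : Finset V) (s : V → V ≃ₗ[ℝ] V) : Prop where
  subset : ↑Pi ⊆ (R : Set V)
  zero_notMem : (0 : V) ∉ R
  reduced : ∀ β ∈ R, ∀ t : ℝ, t • β ∈ R → t = 1 ∨ t = -1
  pos_or_neg : ∀ β ∈ R, (∃ c : V → ℝ, (∀ α, 0 ≤ c α) ∧ β = ∑ α ∈ Pi, c α • α) ∨
    (∃ c : V → ℝ, (∀ α, c α ≤ 0) ∧ β = ∑ α ∈ Pi, c α • α)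
  linearIndepOn : LinearIndepOn ℝ id (Pi : Set V)
  reflection_apply : ∀ α ∈ Pi, ∀ x : V, s α x = x - ⟪x, coroot α⟫ • α
  reflection_mem : ∀ α ∈ Pi, ∀ β ∈ R, s α β ∈ R

theorem IsSimpleSystem.inner_neg_of_notMem_posRoots (hR : IsSimpleSystem R Pi s) {x : V}
    (hx : ∀ γ ∈ Pi, 0 < ⟪x, γ⟫) {β : V} (hβ : β ∈ R) (hnp : β ∉ posRoots R Pi) :
    ⟪x, β⟫ < 0 := by
  rcases hR.pos_or_neg β hβ with hpos | ⟨c, hc, rfl⟩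
  · exact absurd ⟨hβ, hpos⟩ hnp
  have hne : ∑ γ ∈ Pi, (-c γ) • γ ≠ 0 := by
    rw [← neg_ne_zero, ← sum_neg_distrib]
    simpa using ne_of_mem_of_not_mem hβ hR.zero_notMem
  have := inner_sum_smul_pos hx (fun γ => neg_nonneg.2 (hc γ)) hne
  simpa [neg_smul, sum_neg_distrib, inner_neg_right] using this

theorem IsSimpleSystem.map_mem_posRoots_of_ne (hR : IsSimpleSystem R Pi s) {β γ : V}
    (hβ : β ∈ Pi) (hγ : γ ∈ posRoots R Pi) (hγβ : γ ≠ β) :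
    s β γ ∈ posRoots R Pi ∧ s β γ ≠ β := by
  classical
  obtain ⟨hγR, c, hc, hγc⟩ := hγ
  -- `γ` is not a multiple of `β`, so it has a positive coordinate `c δ` with `δ ≠ β`,
  -- which `s β` does not change.
  obtain ⟨δ, hδ, hδβ, hcδ⟩ : ∃ δ ∈ Pi, δ ≠ β ∧ 0 < c δ := by
    by_contra! h
    have hγ' : γ = c β • β := by
      rw [hγc, sum_eq_single_of_mem β hβ fun δ hδ hδβ => by
        rw [le_antisymm (h δ hδ hδβ) (hc δ), zero_smul]]
    rcases hR.reduced β (hR.subset hβ) (c β) (hγ' ▸ hγR) with h1 | h1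
    · exact hγβ (by rw [hγ', h1, one_smul])
    · linarith [hc β]
  have hcoeff : ⟪dualVector Pi δ, s β γ⟫ = c δ := by
    rw [hR.reflection_apply β hβ, inner_sub_right, real_inner_smul_right,
      inner_dualVector_of_ne hβ hδβ.symm, mul_zero, sub_zero, hγc]
    exact inner_dualVector_sum hR.linearIndepOn hδ c
  have hsγR := hR.reflection_mem β hβ γ hγR
  refine ⟨⟨hsγR, ?_⟩, fun h => ?_⟩
  · rcases hR.pos_or_neg _ hsγR with hpos | ⟨e, he, he'⟩
    · exact hpos
    · rw [he', inner_dualVector_sum hR.linearIndepOn hδ] at hcoeff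
      linarith [he δ]
  · rw [h, inner_dualVector_of_ne hβ hδβ.symm] at hcoeff
    linarith

theorem IsSimpleSystem.reflection_sum_posRoots (hR : IsSimpleSystem R Pi s) {T : Finset V}
    (hT : (T : Set V) = posRoots R Pi) {β : V} (hβ : β ∈ Pi) :
    s β (∑ γ ∈ T, γ) = ∑ γ ∈ T, γ - 2 • β := by
  classical
  have hmemT : ∀ γ, γ ∈ T ↔ γ ∈ posRoots R Pi := fun γ => by rw [← mem_coe, hT]
  refine sum_apply_of_mapsTo_erase (s β).toAddEquiv
    ((hmemT β).2 (mem_posRoots_of_mem hR.subset hβ)) (fun γ hγ => ?_) ?_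
  · obtain ⟨hγβ, hγT⟩ := mem_erase.1 hγ
    obtain ⟨hpos, hne⟩ := hR.map_mem_posRoots_of_ne hβ ((hmemT γ).1 hγT) hγβ
    exact mem_erase.2 ⟨hne, (hmemT _).2 hpos⟩
  · change s β β = -β
    rw [hR.reflection_apply β hβ,
      inner_coroot_self (ne_of_mem_of_not_mem (hR.subset hβ) hR.zero_notMem), two_smul,
      sub_add_cancel_left]

theorem IsSimpleSystem.exists_mem_weylGroup_isDominant (hR : IsSimpleSystem R Pi s)
    {P : Finset V} (hP : P ⊆ Pi) {μ : V} (hμ : μ ∈ span ℝ (Pi : Set V))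
    (hμP : ∀ β ∈ P, s β μ = μ) :
    ∃ w ∈ weylGroup s Pi, (∀ β ∈ P, w β ∈ posRoots R Pi) ∧ IsDominant Pi (w μ) := by
  classical
  obtain ⟨ρ, hρ⟩ := exists_inner_pos hR.linearIndepOn
  obtain ⟨T, hT⟩ : ∃ T : Finset V, (T : Set V) = posRoots R Pi :=
    (R.finite_toSet.subset fun β hβ => hβ.1).exists_finset_coe
  set σ := ∑ γ ∈ T, γ
  have hσ : σ ∈ span ℝ (Pi : Set V) := sum_mem fun γ hγ => by
    obtain ⟨-, c, -, rfl⟩ : γ ∈ posRoots R Pi := hT ▸ mem_coe.2 hγ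
    exact sum_mem fun α hα => smul_mem _ _ (subset_span hα)
  let f : (V ≃ₗ[ℝ] V) → ℝ ×ₗ ℝ := fun w => toLex (⟪ρ, w μ⟫, ⟪ρ, w σ⟫)
  have hfin : (f '' weylGroup s Pi).Finite :=
    (((finite_orbit_of_mem_span hR.subset hR.reflection_mem hμ).prod
      (finite_orbit_of_mem_span hR.subset hR.reflection_mem hσ)).image
        fun p => toLex (⟪ρ, p.1⟫, ⟪ρ, p.2⟫)).subset <| by
      rintro _ ⟨w, hw, rfl⟩
      exact ⟨(w μ, w σ), ⟨⟨w, hw, rfl⟩, ⟨w, hw, rfl⟩⟩, rfl⟩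
  obtain ⟨w, hw, hmax⟩ := Set.Finite.exists_maximalFor' f _ hfin ⟨1, one_mem _⟩
  have hlex : ∀ w' ∈ weylGroup s Pi, ¬ f w < f w' := fun w' hw' hlt =>
    hlt.not_ge (hmax hw' hlt.le)
  have hsimple : ∀ β ∈ Pi, s β ∈ weylGroup s Pi := fun β hβ =>
    Subgroup.subset_closure ⟨β, hβ, rfl⟩
  refine ⟨w, hw, fun β hβ => ?_,
    isDominant_of_inner_reflection_le hR.reflection_apply hρ fun δ hδ => ?_⟩
  · by_contra hnp
    have hneg : ⟪ρ, w β⟫ < 0 := hR.inner_neg_of_notMem_posRoots hρ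
      (map_mem_of_mem_weylGroup hR.reflection_mem hw (hR.subset (hP hβ))) hnp
    refine hlex _ (mul_mem hw (hsimple β (hP hβ)))
      (Prod.Lex.toLex_lt_toLex.2 (Or.inr ⟨?_, ?_⟩))
    · simp [LinearEquiv.mul_apply, hμP β hβ]
    · simp only [LinearEquiv.mul_apply]
      rw [hR.reflection_sum_posRoots hT (hP hβ), map_sub, two_nsmul, map_add, inner_sub_right,
        inner_add_right]
      linarith
  · by_contra! hlt
    exact hlex _ (mul_mem (hsimple δ hδ) hw) (Prod.Lex.toLex_lt_toLex.2 (Or.inl hlt))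

theorem IsSimpleSystem.inner_dualVector_eq_zero [DecidableEq V] (hR : IsSimpleSystem R Pi s)
    {P : Finset V} (hP : P ⊆ Pi) {lam : V}
    (H : ∀ x, IsDominant Pi x → ∀ w ∈ weylGroup s Pi, (∀ α ∈ P, w α ∈ posRoots R Pi) →
      ⟪x, w lam⟫ ≤ 0)
    {α : V} (hα : α ∈ Pi) (hαP : α ∉ P) : ⟪dualVector Pi α, lam⟫ = 0 := by
  have hfix : ∀ β ∈ P, s β (-dualVector Pi α) = -dualVector Pi α := fun β hβ =>
    apply_eq_self_of_inner_eq_zero hR.reflection_apply (hP hβ) <| by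
      rw [inner_neg_left, inner_dualVector_of_ne (hP hβ) (ne_of_mem_of_not_mem hβ hαP),
        neg_zero]
  obtain ⟨w, hw, hwP, hwdom⟩ :=
    hR.exists_mem_weylGroup_isDominant hP (neg_mem (dualVector_mem_span hα)) hfix
  have hge := H _ hwdom w hw hwP
  rw [inner_map_map_of_mem_weylGroup (fun h => hR.zero_notMem (hR.subset h))
    hR.reflection_apply hw, inner_neg_left, neg_nonpos] at hge
  refine le_antisymm ?_ hge
  simpa using H _ (isDominant_dualVector hR.linearIndepOn hα) 1 (one_mem _)
    fun β hβ => mem_posRoots_of_mem hR.subset (hP hβ)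

theorem inner_apply_sum_smul_coroot_nonpos {P : Finset V} {x : V} (hx : IsDominant Pi x)
    {w : V ≃ₗ[ℝ] V} (hwP : ∀ α ∈ P, w α ∈ posRoots R Pi) {c : V → ℝ}
    (hc : ∀ α ∈ P, c α ≤ 0) : ⟪x, w (∑ α ∈ P, c α • coroot α)⟫ ≤ 0 := by
  rw [map_sum, inner_sum]
  refine sum_nonpos fun α hα => ?_
  rw [coroot, map_smul, map_smul, real_inner_smul_right, real_inner_smul_right]
  exact mul_nonpos_of_nonpos_of_nonneg (hc α hα) (mul_nonneg
    (div_nonneg zero_le_two real_inner_self_nonneg) (hx.inner_nonneg_of_mem_posRoots (hwP α hα)))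

end RootCone

open RootCone Submodule Finset

theorem stmt3_general
    (R Pi : Finset E) (hPiR : ↑Pi ⊆ (R : Set E)) (h0 : (0 : E) ∉ R)
    (hred : ∀ β ∈ R, ∀ t : ℝ, t • β ∈ R → t = 1 ∨ t = -1)
    (hbasis : ∀ β ∈ R, (∃ c : E → ℝ, (∀ α, 0 ≤ c α) ∧ β = ∑ α ∈ Pi, c α • α) ∨
                       (∃ c : E → ℝ, (∀ α, c α ≤ 0) ∧ β = ∑ α ∈ Pi, c α • α))
    (hindep : LinearIndependent ℝ (fun x : {x // x ∈ Pi} => (x : E)))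
    (s : E → (E ≃ₗ[ℝ] E))
    (hs : ∀ α ∈ Pi, ∀ x : E, s α x = x - ⟪x, coroot α⟫ • α)
    (hsR : ∀ α ∈ Pi, ∀ β ∈ R, s α β ∈ R)
    (P : Finset E) (hP : P ⊆ Pi) (lam : E) :
    (∀ x : E, (∀ α ∈ Pi, 0 ≤ ⟪x, coroot α⟫) →
      ∀ w : E ≃ₗ[ℝ] E, w ∈ Subgroup.closure (s '' ↑Pi) →
        (∀ α ∈ P, w α ∈ posRoots R Pi) → ⟪x, w lam⟫ ≤ 0)
    ↔ ∃ c : E → ℝ, (∀ α ∈ P, c α ≤ 0) ∧ lam = ∑ α ∈ P, c α • coroot α := by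
  classical
  have hR : IsSimpleSystem R Pi s := ⟨hPiR, h0, hred, hbasis, hindep, hs, hsR⟩
  refine ⟨fun H => ?_, fun ⟨c, hc, hlam⟩ x hx w _ hwP => hlam ▸
    inner_apply_sum_smul_coroot_nonpos hx hwP hc⟩
  have hdom : ∀ x, IsDominant Pi x → ⟪x, lam⟫ ≤ 0 := fun x hx =>
    H x hx 1 (one_mem _) fun α hα => mem_posRoots_of_mem hPiR (hP hα)
  have hlam : lam ∈ span ℝ (Pi : Set E) :=
    mem_of_forall_inner_nonpos _ fun x hx => hdom x (isDominant_of_mem_orthogonal hx)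
  have hneg : ∀ γ ∈ Pi, ⟪dualVector Pi γ, lam⟫ ≤ 0 := fun γ hγ =>
    hdom _ (isDominant_dualVector hR.linearIndepOn hγ)
  refine ⟨fun γ => ⟪dualVector Pi γ, lam⟫ * (⟪γ, γ⟫ / 2), fun γ hγ =>
    mul_nonpos_of_nonpos_of_nonneg (hneg γ (hP hγ))
      (div_nonneg real_inner_self_nonneg zero_le_two), ?_⟩
  calc lam = ∑ γ ∈ Pi, ⟪dualVector Pi γ, lam⟫ • γ :=
        eq_sum_inner_dualVector_smul hR.linearIndepOn hlam
    _ = ∑ γ ∈ P, ⟪dualVector Pi γ, lam⟫ • γ := (sum_subset hP fun γ hγ hγP => by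
        rw [hR.inner_dualVector_eq_zero hP H hγ hγP, zero_smul]).symm
    _ = _ := sum_congr rfl fun γ hγ => by
      rw [mul_smul, smul_coroot (ne_of_mem_of_not_mem (hPiR (hP hγ)) h0)]

theorem stmt3
    (R Pi : Finset E) (hPiR : ↑Pi ⊆ (R : Set E)) (h0 : (0 : E) ∉ R)
    (hred : ∀ β ∈ R, ∀ t : ℝ, t • β ∈ R → t = 1 ∨ t = -1)
    (hcrys : ∀ α ∈ R, ∀ β ∈ R, ∃ n : ℤ, ⟪β, coroot α⟫ = (n : ℝ))
    (hbasis : ∀ β ∈ R, (∃ c : E → ℝ, (∀ α, 0 ≤ c α) ∧ β = ∑ α ∈ Pi, c α • α) ∨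
                       (∃ c : E → ℝ, (∀ α, c α ≤ 0) ∧ β = ∑ α ∈ Pi, c α • α))
    (hindep : LinearIndependent ℝ (fun x : {x // x ∈ Pi} => (x : E)))
    (s : E → (E ≃ₗ[ℝ] E))
    (hs : ∀ α ∈ Pi, ∀ x : E, s α x = x - ⟪x, coroot α⟫ • α)
    (hsR : ∀ α ∈ Pi, ∀ β ∈ R, s α β ∈ R)
    (P : Finset E) (hP : P ⊆ Pi) (lam : E) :
    (∀ x : E, (∀ α ∈ Pi, 0 ≤ ⟪x, coroot α⟫) →
      ∀ w : E ≃ₗ[ℝ] E, w ∈ Subgroup.closure (s '' ↑Pi) →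
        (∀ α ∈ P, w α ∈ posRoots R Pi) → ⟪x, w lam⟫ ≤ 0)
    ↔ ∃ c : E → ℝ, (∀ α ∈ P, c α ≤ 0) ∧ lam = ∑ α ∈ P, c α • coroot α :=
  stmt3_general R Pi hPiR h0 hred hbasis hindep s hs hsR P hP lam
end
end

section
/- (Langlands' lemma) Let Π be a basis of a root system R in a*, and for each α ∈ Π let δ_α ∈ a_Π (the span of the coroots) be the fundamental coweight determined by ⟨β, δ_α⟩ = 1 if β = α and 0 if β ∈ Π \ {α}. Then for every λ ∈ a there is a unique subset F(λ) ⊆ Π such that λ can be written as λ = λ^Π + Σ_{α ∈ Π∖F(λ)} d_α δ_α + Σ_{α ∈ F(λ)} c_α α^∨ with λ^Π orthogonal to the span of R^∨, d_α > 0 and c_α ≤ 0. -/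
/-!
STATEMENT 4 (Langlands' lemma): For each α ∈ Π let δ_α ∈ a_Π (the span of the
coroots) be the fundamental coweight with ⟨β, δ_α⟩ = 1 if β = α and 0 for
β ∈ Π \ {α}.  Then for every λ ∈ a there is a unique F(λ) ⊆ Π such that
λ = λ^Π + Σ_{α ∈ Π∖F} d_α δ_α + Σ_{α ∈ F} c_α α^∨ with λ^Π ⊥ span(R^∨),
d_α > 0 and c_α ≤ 0.
-/

open scoped RealInnerProductSpace

noncomputable section

variable {E : Type*} [NormedAddCommGroup E] [InnerProductSpace ℝ E] [FiniteDimensional ℝ E]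

/-- Uniqueness of points satisfying the variational characterization of the projection
onto a convex set. -/
lemma proj_unique' {y p₁ p₂ : E} {K : Set E} (h₁ : p₁ ∈ K) (h₂ : p₂ ∈ K)
    (v₁ : ∀ w ∈ K, ⟪y - p₁, w - p₁⟫ ≤ 0) (v₂ : ∀ w ∈ K, ⟪y - p₂, w - p₂⟫ ≤ 0) :
    p₁ = p₂ := by
  have a := v₁ p₂ h₂
  have b := v₂ p₁ h₁
  have hb : 0 ≤ ⟪y - p₂, p₂ - p₁⟫ := by
    rw [show p₂ - p₁ = -(p₁ - p₂) by abel, inner_neg_right]; linarith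
  have key : ⟪p₂ - p₁, p₂ - p₁⟫ ≤ 0 := by
    have h : ⟪(y - p₁) - (y - p₂), p₂ - p₁⟫ ≤ 0 := by rw [inner_sub_left]; linarith
    rwa [show (y - p₁) - (y - p₂) = p₂ - p₁ by abel] at h
  have h0 : ⟪p₂ - p₁, p₂ - p₁⟫ = 0 := le_antisymm key real_inner_self_nonneg
  exact (sub_eq_zero.mp (inner_self_eq_zero.mp h0)).symm

theorem stmt4 [DecidableEq E]
    (R Pi : Finset E) (hPiR : ↑Pi ⊆ (R : Set E)) (h0 : (0 : E) ∉ R)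
    (hred : ∀ β ∈ R, ∀ t : ℝ, t • β ∈ R → t = 1 ∨ t = -1)
    (hcrys : ∀ α ∈ R, ∀ β ∈ R, ∃ n : ℤ, ⟪β, coroot α⟫ = (n : ℝ))
    (hbasis : ∀ β ∈ R, (∃ c : E → ℝ, (∀ α, 0 ≤ c α) ∧ β = ∑ α ∈ Pi, c α • α) ∨
                       (∃ c : E → ℝ, (∀ α, c α ≤ 0) ∧ β = ∑ α ∈ Pi, c α • α))
    (hindep : LinearIndependent ℝ (fun x : {x // x ∈ Pi} => (x : E)))
    -- the fundamental coweights δ_α relative to Π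
    (δ : E → E)
    (hδmem : ∀ α ∈ Pi, δ α ∈ Submodule.span ℝ (coroot '' R))
    (hδpair : ∀ α ∈ Pi, ∀ β ∈ Pi, ⟪β, δ α⟫ = if β = α then 1 else 0)
    (lam : E) :
    ∃! F : Finset E, F ⊆ Pi ∧
      ∃ (lamPi : E) (d c : E → ℝ),
        lamPi ∈ (Submodule.span ℝ (coroot '' R))ᗮ ∧
        (∀ α ∈ Pi \ F, 0 < d α) ∧ (∀ α ∈ F, c α ≤ 0) ∧
        lam = lamPi + (∑ α ∈ Pi \ F, d α • δ α) + ∑ α ∈ F, c α • coroot α := by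
  classical
  have hPiR' : ∀ α ∈ Pi, α ∈ R := fun α hα => hPiR hα
  set V : Submodule ℝ E := Submodule.span ℝ (coroot '' R) with hVdef
  have hα0 : ∀ α ∈ Pi, (⟪α, α⟫ : ℝ) ≠ 0 := by
    intro α hα h
    exact h0 ((inner_self_eq_zero.mp h) ▸ hPiR' α hα)
  have hcorV : ∀ α ∈ Pi, coroot α ∈ V := fun α hα =>
    Submodule.subset_span ⟨α, hPiR' α hα, rfl⟩
  have hPiV : ∀ α ∈ Pi, α ∈ V := by
    intro α hα
    have h2 : (⟪α, α⟫ / 2 : ℝ) • coroot α = α := by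
      rw [coroot, smul_smul]
      have h := hα0 α hα
      have : (⟪α, α⟫ / 2 : ℝ) * (2 / ⟪α, α⟫) = 1 := by
        field_simp
      rw [this, one_smul]
    exact h2 ▸ Submodule.smul_mem _ _ (hcorV α hα)
  have hVle : V ≤ Submodule.span ℝ (Pi : Set E) := by
    rw [hVdef]
    apply Submodule.span_le.mpr
    rintro _ ⟨β, hβ, rfl⟩
    have hβspan : β ∈ Submodule.span ℝ (Pi : Set E) := by
      rcases hbasis β hβ with ⟨c, _, hc⟩ | ⟨c, _, hc⟩ <;>
      · rw [hc]
        exact Submodule.sum_mem _ fun α hα =>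
          Submodule.smul_mem _ _ (Submodule.subset_span (Finset.mem_coe.mpr hα))
    exact Submodule.smul_mem _ _ hβspan
  -- dual expansion in V
  have hdual : ∀ u ∈ V, u = ∑ α ∈ Pi, ⟪u, α⟫ • δ α := by
    intro u hu
    have hrV : u - ∑ α ∈ Pi, ⟪u, α⟫ • δ α ∈ Submodule.span ℝ (Pi : Set E) :=
      Submodule.sub_mem _ (hVle hu)
        (Submodule.sum_mem _ fun α hα => Submodule.smul_mem _ _ (hVle (hδmem α hα)))
    set r := u - ∑ α ∈ Pi, ⟪u, α⟫ • δ α with hr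
    have hr0 : ∀ β ∈ (Pi : Set E), ⟪r, β⟫ = 0 := by
      intro β hβ'
      have hβ : β ∈ Pi := hβ'
      rw [hr, inner_sub_left, sum_inner]
      have hterm : ∀ α ∈ Pi, ⟪⟪u, α⟫ • δ α, β⟫ = if β = α then ⟪u, α⟫ else 0 := by
        intro α hα
        rw [real_inner_smul_left, real_inner_comm β (δ α), hδpair α hα β hβ]
        split <;> ring
      rw [Finset.sum_congr rfl hterm, Finset.sum_ite_eq Pi β (fun α => ⟪u, α⟫), if_pos hβ]
      ring
    have hr00 : ∀ x ∈ Submodule.span ℝ (Pi : Set E), ⟪r, x⟫ = 0 := by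
      intro x hx
      induction hx using Submodule.span_induction with
      | mem x hx => exact hr0 x hx
      | zero => simp
      | add x y _ _ hx hy => rw [inner_add_right, hx, hy]; ring
      | smul a x _ hx => rw [real_inner_smul_right, hx]; ring
    have : r = 0 := inner_self_eq_zero.mp (hr00 r hrV)
    exact sub_eq_zero.mp this
  -- the cone generated by Pi
  let f : ({x // x ∈ Pi} → ℝ) →ₗ[ℝ] E :=
    { toFun := fun zf => ∑ i : {x // x ∈ Pi}, zf i • (i : E)
      map_add' := fun x y => by simp [add_smul, Finset.sum_add_distrib]
      map_smul' := fun r x => by simp [Finset.smul_sum, smul_smul] }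
  have hfapp : ∀ zf : {x // x ∈ Pi} → ℝ, f zf = ∑ i : {x // x ∈ Pi}, zf i • (i : E) :=
    fun _ => rfl
  have hfext : ∀ g : E → ℝ, f (fun i => g ↑i) = ∑ α ∈ Pi, g α • α := by
    intro g
    rw [hfapp, Finset.univ_eq_attach, Finset.sum_attach Pi (fun α => g α • α)]
  set S : Set ({x // x ∈ Pi} → ℝ) := {zf | ∀ i, 0 ≤ zf i} with hSdef
  set K : Set E := f '' S with hKdef
  have hKne : K.Nonempty := ⟨f 0, ⟨0, fun i => le_refl 0, rfl⟩⟩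
  have hSconv : Convex ℝ S := by
    intro x hx y hy a b ha hb _
    intro i
    exact add_nonneg (mul_nonneg ha (hx i)) (mul_nonneg hb (hy i))
  have hKconv : Convex ℝ K := hSconv.linear_image f
  have hSclosed : IsClosed S := by
    have : S = ⋂ i, (fun zf : {x // x ∈ Pi} → ℝ => zf i) ⁻¹' Set.Ici 0 := by
      ext zf; simp [hSdef, Set.mem_iInter]
    rw [this]
    exact isClosed_iInter fun i => isClosed_Ici.preimage (continuous_apply i)
  have hker : LinearMap.ker f = ⊥ := by
    rw [LinearMap.ker_eq_bot']
    intro zf hzf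
    have h := Fintype.linearIndependent_iff.mp hindep zf hzf
    funext i
    exact h i
  have hKclosed : IsClosed K :=
    (LinearMap.isClosedEmbedding_of_injective hker).isClosedMap _ hSclosed
  -- decompose lam
  obtain ⟨v, hvV, lamPi0, hlamPi0, hlamdecomp⟩ := V.exists_add_mem_mem_orthogonal lam
  -- projection of -v onto K
  obtain ⟨p, hpK, hproj⟩ :=
    exists_norm_eq_iInf_of_complete_convex hKne hKclosed.isComplete hKconv (-v)
  rw [norm_eq_iInf_iff_real_inner_le_zero hKconv hpK] at hproj
  obtain ⟨zf, hzf0', hpzf⟩ := hpK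
  have hpK : p ∈ K := ⟨zf, hzf0', hpzf⟩
  have hzf0 : ∀ i, 0 ≤ zf i := hzf0'
  set z : E → ℝ := fun α => if h : α ∈ Pi then zf ⟨α, h⟩ else 0 with hzdef
  have hz0 : ∀ α, 0 ≤ z α := by
    intro α
    rw [hzdef]
    dsimp only
    split
    · exact hzf0 _
    · exact le_refl 0
  have hp : p = ∑ α ∈ Pi, z α • α := by
    have hzfz : (fun i : {x // x ∈ Pi} => z ↑i) = zf := by
      funext i
      rw [hzdef]
      simp
    rw [← hpzf, ← hzfz, hfext]
  have hpV : p ∈ V := by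
    rw [hp]
    exact Submodule.sum_mem _ fun α hα => Submodule.smul_mem _ _ (hPiV α hα)
  -- nonnegativity of the dual coefficients
  have hw0 : ∀ α ∈ Pi, 0 ≤ ⟪v + p, α⟫ := by
    intro α hα
    have hmem : p + α ∈ K := by
      refine ⟨zf + fun j => if j = ⟨α, hα⟩ then 1 else 0, ?_, ?_⟩
      · intro i
        have hi : (zf + fun j => if j = (⟨α, hα⟩ : {x // x ∈ Pi}) then (1:ℝ) else 0) i
            = zf i + if i = ⟨α, hα⟩ then 1 else 0 := rfl
        rw [hi]
        by_cases h : i = (⟨α, hα⟩ : {x // x ∈ Pi})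
        · rw [if_pos h]; linarith [hzf0 i]
        · rw [if_neg h]; simpa using hzf0 i
      · rw [map_add, hpzf, hfapp]
        congr 1
        simp [ite_smul]
    have h1 := hproj (p + α) hmem
    rw [add_sub_cancel_left, show -v - p = -(v + p) from by abel, inner_neg_left] at h1
    linarith
  have hmem0 : (0:E) ∈ K := ⟨0, fun i => le_refl 0, map_zero f⟩
  have hmem2 : p + p ∈ K := ⟨zf + zf, fun i => add_nonneg (hzf0 i) (hzf0 i),
    by rw [map_add, hpzf]⟩
  have hvpp : ⟪v + p, p⟫ = 0 := by
    have h1 := hproj 0 hmem0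
    have h2 := hproj (p + p) hmem2
    rw [zero_sub, show -v - p = -(v + p) from by abel, inner_neg_left, inner_neg_right] at h1
    rw [add_sub_cancel_left, show -v - p = -(v + p) from by abel, inner_neg_left] at h2
    linarith
  have hsum0 : ∑ α ∈ Pi, z α * ⟪v + p, α⟫ = 0 := by
    have hcalc : ⟪v + p, p⟫ = ∑ α ∈ Pi, z α * ⟪v + p, α⟫ := by
      calc ⟪v + p, p⟫ = ⟪v + p, ∑ α ∈ Pi, z α • α⟫ := by rw [← hp]
        _ = ∑ α ∈ Pi, z α * ⟪v + p, α⟫ := by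
            rw [inner_sum]
            exact Finset.sum_congr rfl fun α _ => real_inner_smul_right _ _ _
    rw [← hcalc, hvpp]
  have hzw : ∀ α ∈ Pi, z α * ⟪v + p, α⟫ = 0 := by
    intro α hα
    exact (Finset.sum_eq_zero_iff_of_nonneg
      (fun β hβ => mul_nonneg (hz0 β) (hw0 β hβ))).mp hsum0 α hα
  -- the distinguished subset
  set F₀ : Finset E := Pi.filter (fun α => ⟪v + p, α⟫ = 0) with hF₀def
  set c₀ : E → ℝ := fun α => -(z α) * (⟪α, α⟫ / 2) with hc₀def
  have hcor : ∀ α ∈ Pi, c₀ α • coroot α = (-(z α)) • α := by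
    intro α hα
    rw [hc₀def]
    dsimp only
    rw [coroot, smul_smul]
    congr 1
    have h := hα0 α hα
    field_simp
  have hsum1 : ∑ α ∈ Pi \ F₀, ⟪v + p, α⟫ • δ α = ∑ α ∈ Pi, ⟪v + p, α⟫ • δ α := by
    apply Finset.sum_subset Finset.sdiff_subset
    intro α hα hns
    have hmemF : α ∈ F₀ := by
      by_contra h
      exact hns (Finset.mem_sdiff.mpr ⟨hα, h⟩)
    have hw : ⟪v + p, α⟫ = 0 := (Finset.mem_filter.mp hmemF).2
    rw [hw, zero_smul]
  have hsum2 : ∑ α ∈ F₀, (-(z α)) • α = ∑ α ∈ Pi, (-(z α)) • α := by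
    apply Finset.sum_subset (Finset.filter_subset _ _)
    intro α hα hns
    have hwne : ⟪v + p, α⟫ ≠ 0 := fun h => hns (Finset.mem_filter.mpr ⟨hα, h⟩)
    have hz : z α = 0 := by
      rcases mul_eq_zero.mp (hzw α hα) with h | h
      · exact h
      · exact absurd h hwne
    rw [hz, neg_zero, zero_smul]
  have hveq : v = (∑ α ∈ Pi \ F₀, ⟪v + p, α⟫ • δ α) + ∑ α ∈ F₀, (-(z α)) • α := by
    have hvp : v + p = ∑ α ∈ Pi, ⟪v + p, α⟫ • δ α :=
      hdual (v + p) (Submodule.add_mem _ hvV hpV)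
    have hnp : ∑ α ∈ Pi, (-(z α)) • α = -p := by
      rw [hp, ← Finset.sum_neg_distrib]
      exact Finset.sum_congr rfl fun α _ => neg_smul _ _
    rw [hsum1, hsum2, ← hvp, hnp]
    abel
  have heqn : lam = lamPi0 + (∑ α ∈ Pi \ F₀, ⟪v + p, α⟫ • δ α)
      + ∑ α ∈ F₀, c₀ α • coroot α := by
    have hcongr : ∑ α ∈ F₀, c₀ α • coroot α = ∑ α ∈ F₀, (-(z α)) • α :=
      Finset.sum_congr rfl fun α hα => hcor α (Finset.filter_subset _ _ hα)
    rw [hcongr, hlamdecomp]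
    conv_lhs => rw [hveq]
    abel
  refine ⟨F₀, ⟨Finset.filter_subset _ _, lamPi0, (fun α => ⟪v + p, α⟫), c₀, hlamPi0,
    ?_, ?_, heqn⟩, ?_⟩
  · intro α hα
    obtain ⟨hαPi, hαF⟩ := Finset.mem_sdiff.mp hα
    have hne : ⟪v + p, α⟫ ≠ 0 := fun h => hαF (Finset.mem_filter.mpr ⟨hαPi, h⟩)
    exact lt_of_le_of_ne (hw0 α hαPi) (Ne.symm hne)
  · intro α hα
    have h1 : 0 ≤ z α * (⟪α, α⟫ / 2) :=
      mul_nonneg (hz0 α) (div_nonneg real_inner_self_nonneg (by norm_num))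
    show -(z α) * (⟪α, α⟫ / 2) ≤ 0
    nlinarith
  -- uniqueness
  rintro F ⟨hFPi, lamPi', d, c', hlamPi', hd, hc', heq⟩
  set m := (∑ α ∈ Pi \ F, d α • δ α) + ∑ α ∈ F, c' α • coroot α with hm
  have hmV : m ∈ V := Submodule.add_mem _
    (Submodule.sum_mem _ fun α hα =>
      Submodule.smul_mem _ _ (hδmem α (Finset.mem_sdiff.mp hα).1))
    (Submodule.sum_mem _ fun α hα => Submodule.smul_mem _ _ (hcorV α (hFPi hα)))
  have hmv : m = v := by
    have e2 : lam = lamPi' + m := by rw [hm, ← add_assoc]; exact heq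
    have h3 : v + lamPi0 = lamPi' + m := hlamdecomp.symm.trans e2
    have e4 : m - v = lamPi0 - lamPi' := by
      rw [sub_eq_sub_iff_add_eq_add]
      calc m + lamPi' = lamPi' + m := add_comm _ _
        _ = v + lamPi0 := h3.symm
        _ = lamPi0 + v := add_comm _ _
    have h1 : m - v ∈ V := Submodule.sub_mem _ hmV hvV
    have h2 : m - v ∈ Vᗮ := by rw [e4]; exact Submodule.sub_mem _ hlamPi0 hlamPi'
    have : ⟪m - v, m - v⟫ = 0 := Submodule.inner_right_of_mem_orthogonal h1 h2
    exact sub_eq_zero.mp (inner_self_eq_zero.mp this)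
  set z' : E → ℝ := fun α => if α ∈ F then -(c' α) * (2 / ⟪α, α⟫) else 0 with hz'def
  have hz'0 : ∀ α, 0 ≤ z' α := by
    intro α
    rw [hz'def]
    dsimp only
    split
    · next h =>
        exact mul_nonneg (neg_nonneg.mpr (hc' α h))
          (div_nonneg (by norm_num) real_inner_self_nonneg)
    · exact le_refl 0
  set u' : E := ∑ α ∈ Pi, z' α • α with hu'
  have hu'K : u' ∈ K := ⟨fun i => z' ↑i, fun i => hz'0 _, by rw [hfext]⟩
  have hu'c : u' = ∑ α ∈ F, (-(c' α)) • coroot α := by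
    rw [hu', ← Finset.sum_subset hFPi (fun α hα hnα => by
      rw [hz'def]; dsimp only; rw [if_neg hnα, zero_smul])]
    refine Finset.sum_congr rfl fun α hα => ?_
    rw [hz'def]
    dsimp only
    rw [if_pos hα, coroot, smul_smul]
  have hkey : v + u' = ∑ α ∈ Pi \ F, d α • δ α := by
    rw [← hmv, hm, hu'c]
    rw [show ∑ α ∈ F, (-(c' α)) • coroot α = -∑ α ∈ F, c' α • coroot α from by
      rw [← Finset.sum_neg_distrib]
      exact Finset.sum_congr rfl fun α _ => neg_smul _ _]
    abel
  have hpair : ∀ α ∈ Pi, ⟪v + u', α⟫ = if α ∈ Pi \ F then d α else 0 := by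
    intro α hα
    rw [hkey, sum_inner]
    have hterm : ∀ β ∈ Pi \ F, ⟪d β • δ β, α⟫ = if α = β then d β else 0 := by
      intro β hβ
      have hβPi : β ∈ Pi := (Finset.mem_sdiff.mp hβ).1
      rw [real_inner_smul_left, real_inner_comm α (δ β), hδpair β hβPi α hα]
      split <;> ring
    rw [Finset.sum_congr rfl hterm, Finset.sum_ite_eq]
  have hvar : ∀ x ∈ K, ⟪-v - u', x - u'⟫ ≤ 0 := by
    rintro x ⟨t, ht0, rfl⟩
    have hpos : ∀ α ∈ Pi, 0 ≤ ⟪v + u', α⟫ := by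
      intro α hα
      rw [hpair α hα]
      split
      · next h => exact le_of_lt (hd α h)
      · exact le_refl 0
    have h1 : 0 ≤ ⟪v + u', f t⟫ := by
      rw [hfapp, inner_sum]
      apply Finset.sum_nonneg
      intro i _
      rw [real_inner_smul_right]
      exact mul_nonneg (ht0 i) (hpos ↑i i.2)
    have h2 : ⟪v + u', u'⟫ = 0 := by
      have hcalc : ⟪v + u', u'⟫ = ∑ α ∈ Pi, z' α * ⟪v + u', α⟫ := by
        calc ⟪v + u', u'⟫ = ⟪v + u', ∑ α ∈ Pi, z' α • α⟫ := by rw [← hu']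
          _ = ∑ α ∈ Pi, z' α * ⟪v + u', α⟫ := by
              rw [inner_sum]
              exact Finset.sum_congr rfl fun α _ => real_inner_smul_right _ _ _
      rw [hcalc]
      apply Finset.sum_eq_zero
      intro α hα
      by_cases hF : α ∈ F
      · have hz0' : ⟪v + u', α⟫ = 0 := by
          rw [hpair α hα, if_neg (fun hmem => (Finset.mem_sdiff.mp hmem).2 hF)]
        rw [hz0', mul_zero]
      · rw [hz'def]
        dsimp only
        rw [if_neg hF, zero_mul]
    calc ⟪-v - u', f t - u'⟫ = -⟪v + u', f t⟫ + ⟪v + u', u'⟫ := by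
          rw [show -v - u' = -(v + u') from by abel, inner_neg_left, inner_sub_right]
          ring
      _ ≤ 0 := by rw [h2]; linarith
  have hup : u' = p := proj_unique' hu'K hpK hvar hproj
  ext a
  constructor
  · intro haF
    have haPi : a ∈ Pi := hFPi haF
    refine Finset.mem_filter.mpr ⟨haPi, ?_⟩
    have hpa := hpair a haPi
    rw [hup] at hpa
    rw [hpa, if_neg (fun hmem => (Finset.mem_sdiff.mp hmem).2 haF)]
  · intro haF₀
    obtain ⟨haPi, hwa⟩ := Finset.mem_filter.mp haF₀
    by_contra haF
    have hpa := hpair a haPi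
    rw [hup] at hpa
    rw [if_pos (Finset.mem_sdiff.mpr ⟨haPi, haF⟩)] at hpa
    have hda := hd a (Finset.mem_sdiff.mpr ⟨haPi, haF⟩)
    rw [hwa] at hpa
    linarith

end
end

section
/- (Clifford theory, first part) Let A be a complex algebra, Γ a finite group acting on A by automorphisms ψ_γ, and (π, V) an irreducible A-module of countable dimension. Let Γ_π = {γ ∈ Γ : π∘ψ_γ^{-1} ≅ π}, choose intertwiners I^γ : V → V satisfying I^γ(π(h)v) = π(ψ_γ^{-1}h)I^γ(v) with I^e = Id, and let κ : Γ_π × Γ_π → C^× be the 2-cocycle defined by I^{γγ'} = κ(γ,γ') I^γ I^{γ'}. Then the map T(γ ⊗ v) = T_γ ⊗ I^γ(v) is an isomorphism of Γ_π ⋉ A-modules from Ind_A^{Γ_π ⋉ A} V to C[Γ_π, κ] ⊗ V, where Γ_π ⋉ A acts on C[Γ_π, κ] ⊗ V by (γ ⊗ h)(k ⊗ v) = T_γ k ⊗ I^γ(π(h)v). -/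
/-!
STATEMENT 9 (Clifford theory, first part): Let A be a complex algebra, Γπ a finite
group acting on A by automorphisms ψ_γ (Γπ playing the role of the inertia group of
the irreducible countable-dimensional A-module (π,V)), with chosen intertwiners
I^γ : V → V satisfying I^γ(π(h)v) = π(ψ_γ⁻¹ h) I^γ(v), I^e = Id, and 2-cocycle
κ : Γπ × Γπ → ℂˣ with I^{γγ'} = κ(γ,γ') I^γ I^{γ'}.  Then the map
T(γ ⊗ v) = T_γ ⊗ I^γ(v) is an isomorphism of Γπ⋉A-modules from Ind_A^{Γπ⋉A} V to
ℂ[Γπ,κ] ⊗ V, where Γπ⋉A acts on ℂ[Γπ,κ] ⊗ V by (γ ⊗ h)(k ⊗ v) = T_γ k ⊗ I^γ(π(h)v).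
The crossed product Γπ⋉A, the twisted group algebra ℂ[Γπ,κ] and the induced module
are axiomatized by their defining relations and basis decompositions.
-/

open scoped TensorProduct

universe u

theorem stmt9
    (A A' : Type u) [Ring A] [Ring A'] [Algebra ℂ A] [Algebra ℂ A']
    (G : Type u) [Group G] [Fintype G]
    (ψ : G →* RingAut A) (ι : A →ₐ[ℂ] A') (g : G →* A'ˣ)
    (hrel : ∀ (γ : G) (a : A), (g γ : A') * ι a = ι (ψ γ a) * (g γ : A'))
    (hbasis : ∀ x : A', ∃! c : G → A, x = ∑ γ : G, ι (c γ) * (g γ : A'))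
    -- the irreducible A-module (π, V), of countable dimension
    (V : Type u) [AddCommGroup V] [Module A V] [Module ℂ V] [IsScalarTower ℂ A V]
    (hV : IsSimpleModule A V)
    (hcount : ∃ sV : Set V, sV.Countable ∧ Submodule.span ℂ sV = ⊤)
    -- the chosen intertwiners I^γ (so G equals the inertia group Γ_π)
    (Ifun : G → (V ≃+ V))
    (hIsemi : ∀ (γ : G) (a : A) (v : V), Ifun γ (a • v) = ((ψ γ)⁻¹ a) • Ifun γ v)
    (hIe : Ifun 1 = AddEquiv.refl V)
    -- the 2-cocycle κ
    (κ : G → G → ℂˣ)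
    (hκ : ∀ (γ γ' : G) (v : V), Ifun (γ * γ') v = (κ γ γ' : ℂ) • Ifun γ (Ifun γ' v))
    -- the twisted group algebra B = ℂ[Γπ, κ] with basis {T γ}
    (B : Type u) [Ring B] [Algebra ℂ B] (T : G → B)
    (hT : ∀ γ γ' : G, T γ * T γ' = (κ γ γ' : ℂ) • T (γ * γ'))
    (hBbasis : ∀ b : B, ∃! c : G → ℂ, b = ∑ γ : G, c γ • T γ)
    -- the induced module Ind_A^{Γπ⋉A} V, axiomatized
    (IV : Type u) [AddCommGroup IV] [Module A' IV]
    (emb : V →+ IV)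
    (hembA : ∀ (a : A) (v : V), emb (a • v) = ι a • emb v)
    (hIbasis : ∀ x : IV, ∃! c : G → V, x = ∑ γ : G, (g γ : A') • emb (c γ))
    -- the Γπ⋉A-module structure on ℂ[Γπ,κ] ⊗ V :  (γ ⊗ h)(k ⊗ v) = T_γ k ⊗ I^γ(π(h)v)
    [Module A' (B ⊗[ℂ] V)]
    (haction : ∀ (γ : G) (a : A) (k : B) (v : V),
      ((g γ : A') * ι a) • (k ⊗ₜ[ℂ] v) = ((T γ) * k) ⊗ₜ[ℂ] (Ifun γ (a • v))) :
    ∃ Tiso : IV ≃ₗ[A'] (B ⊗[ℂ] V),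
      ∀ (γ : G) (v : V), Tiso ((g γ : A') • emb v) = (T γ) ⊗ₜ[ℂ] (Ifun γ v) := by
  classical
  choose cB hcB hcBu using hBbasis
  choose cI hcI hcIu using hIbasis
  -- ψ facts
  have hψinv : ∀ (δ : G) (a : A), ψ δ (ψ δ⁻¹ a) = a := by
    intro δ a
    have h1 : ψ δ * ψ δ⁻¹ = 1 := by rw [← map_mul, mul_inv_cancel, map_one]
    have h2 : (ψ δ * ψ δ⁻¹) a = ψ δ (ψ δ⁻¹ a) := rfl
    rw [← h2, h1]; rfl
  have hcomm : ∀ (δ : G) (a : A), ι a * (g δ : A') = (g δ : A') * ι (ψ δ⁻¹ a) := by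
    intro δ a
    rw [hrel δ (ψ δ⁻¹ a), hψinv]
  -- cB facts
  have hcBadd : ∀ b₁ b₂ : B, cB (b₁ + b₂) = cB b₁ + cB b₂ := by
    intro b₁ b₂
    refine (hcBu _ _ ?_).symm
    simp only [Pi.add_apply, add_smul, Finset.sum_add_distrib]
    rw [← hcB b₁, ← hcB b₂]
  have hcBsmul : ∀ (z : ℂ) (b : B), cB (z • b) = z • cB b := by
    intro z b
    refine (hcBu _ _ ?_).symm
    simp only [Pi.smul_apply, smul_eq_mul, mul_smul, ← Finset.smul_sum]
    rw [← hcB b]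
  have hcBT : ∀ δ : G, cB (T δ) = fun γ => if γ = δ then (1:ℂ) else 0 := by
    intro δ
    refine (hcBu _ _ ?_).symm
    show T δ = ∑ γ : G, (if γ = δ then (1:ℂ) else 0) • T γ
    rw [Finset.sum_eq_single δ]
    · simp
    · intro b _ hb; simp [hb]
    · simp
  -- the coefficient projections P γ : B ⊗ V →ₗ[ℂ] V
  let P : G → (B ⊗[ℂ] V) →ₗ[ℂ] V := fun γ =>
    TensorProduct.lift
      { toFun := fun b =>
          { toFun := fun v => cB b γ • v
            map_add' := fun v w => smul_add _ _ _
            map_smul' := fun z v => by dsimp; exact smul_comm _ _ _ }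
        map_add' := by intro b₁ b₂; ext v; simp [hcBadd, add_smul]
        map_smul' := by intro z b; ext v; simp [hcBsmul, mul_smul] }
  have hP : ∀ (γ : G) (b : B) (w : V), P γ (b ⊗ₜ[ℂ] w) = cB b γ • w := fun _ _ _ => rfl
  -- cI facts
  have hcIadd : ∀ x y : IV, cI (x + y) = cI x + cI y := by
    intro x y
    refine (hcIu _ _ ?_).symm
    simp only [Pi.add_apply, map_add, smul_add, Finset.sum_add_distrib]
    rw [← hcI x, ← hcI y]
  have hcIg : ∀ (δ : G) (v : V), cI ((g δ : A') • emb v) = fun γ => if γ = δ then v else 0 := by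
    intro δ v
    refine (hcIu _ _ ?_).symm
    show (g δ : A') • emb v = ∑ γ : G, (g γ : A') • emb (if γ = δ then v else 0)
    rw [Finset.sum_eq_single δ]
    · simp
    · intro b _ hb; simp [hb]
    · simp
  -- the map F0
  let F0 : IV → B ⊗[ℂ] V := fun x => ∑ γ : G, T γ ⊗ₜ[ℂ] (Ifun γ (cI x γ))
  have hF0add : ∀ x y : IV, F0 (x + y) = F0 x + F0 y := by
    intro x y
    show (∑ γ : G, T γ ⊗ₜ[ℂ] (Ifun γ (cI (x + y) γ))) =
      (∑ γ : G, T γ ⊗ₜ[ℂ] (Ifun γ (cI x γ))) + ∑ γ : G, T γ ⊗ₜ[ℂ] (Ifun γ (cI y γ))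
    rw [hcIadd]
    simp [Pi.add_apply, map_add, TensorProduct.tmul_add, Finset.sum_add_distrib]
  let Fh : IV →+ B ⊗[ℂ] V := AddMonoidHom.mk' F0 hF0add
  have hFsum : ∀ (f : G → IV), F0 (∑ γ : G, f γ) = ∑ γ : G, F0 (f γ) :=
    fun f => map_sum Fh f Finset.univ
  have hF0basic : ∀ (δ : G) (v : V), F0 ((g δ : A') • emb v) = T δ ⊗ₜ[ℂ] (Ifun δ v) := by
    intro δ v
    show (∑ γ : G, T γ ⊗ₜ[ℂ] (Ifun γ (cI ((g δ : A') • emb v) γ))) = _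
    rw [hcIg δ v, Finset.sum_eq_single δ]
    · simp
    · intro b _ hb; simp [hb]
    · simp
  have hbase' : ∀ (δ : G) (v : V),
      (g δ : A') • ((1:B) ⊗ₜ[ℂ] v) = T δ ⊗ₜ[ℂ] (Ifun δ v) := by
    intro δ v
    have h := haction δ 1 1 v
    simpa using h
  -- key equivariance for generators
  have hact_key : ∀ (a : A) (γ : G) (x : IV),
      F0 ((ι a * (g γ : A')) • x) = (ι a * (g γ : A')) • F0 x := by
    intro a γ x
    have step1 : ∀ (γ' : G) (v : V),
        F0 ((ι a * (g γ : A')) • ((g γ' : A') • emb v))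
          = (ι a * (g γ : A')) • F0 ((g γ' : A') • emb v) := by
      intro γ' v
      have hmul : ι a * (g γ : A') * (g γ' : A')
          = (g (γ * γ') : A') * ι (ψ (γ * γ')⁻¹ a) := by
        rw [mul_assoc, ← Units.val_mul, ← map_mul, hcomm]
      calc F0 ((ι a * (g γ : A')) • ((g γ' : A') • emb v))
          = F0 ((g (γ * γ') : A') • emb ((ψ (γ * γ')⁻¹ a) • v)) := by
            rw [smul_smul, hmul, mul_smul, ← hembA]
        _ = T (γ * γ') ⊗ₜ[ℂ] Ifun (γ * γ') ((ψ (γ * γ')⁻¹ a) • v) := hF0basic _ _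
        _ = ((g (γ * γ') : A') * ι (ψ (γ * γ')⁻¹ a)) • ((1:B) ⊗ₜ[ℂ] v) := by
            rw [haction (γ * γ') (ψ (γ * γ')⁻¹ a) 1 v, mul_one]
        _ = (ι a * (g γ : A')) • ((g γ' : A') • ((1:B) ⊗ₜ[ℂ] v)) := by
            rw [smul_smul, hmul]
        _ = (ι a * (g γ : A')) • F0 ((g γ' : A') • emb v) := by
            rw [hbase', hF0basic]
    calc F0 ((ι a * (g γ : A')) • x)
        = F0 ((ι a * (g γ : A')) • ∑ γ' : G, (g γ' : A') • emb (cI x γ')) := by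
          conv_lhs => rw [hcI x]
      _ = F0 (∑ γ' : G, (ι a * (g γ : A')) • ((g γ' : A') • emb (cI x γ'))) := by
          rw [Finset.smul_sum]
      _ = ∑ γ' : G, F0 ((ι a * (g γ : A')) • ((g γ' : A') • emb (cI x γ'))) :=
          hFsum _
      _ = ∑ γ' : G, (ι a * (g γ : A')) • F0 ((g γ' : A') • emb (cI x γ')) :=
          Finset.sum_congr rfl (fun γ' _ => step1 γ' _)
      _ = (ι a * (g γ : A')) • ∑ γ' : G, F0 ((g γ' : A') • emb (cI x γ')) :=
          (Finset.smul_sum).symm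
      _ = (ι a * (g γ : A')) • F0 x := by
          rw [← hFsum]
          conv_rhs => rw [hcI x]
  have hFsmul : ∀ (s : A') (x : IV), F0 (s • x) = s • F0 x := by
    intro s x
    obtain ⟨c, hc, -⟩ := hbasis s
    rw [hc, Finset.sum_smul, Finset.sum_smul, hFsum]
    exact Finset.sum_congr rfl (fun γ _ => hact_key (c γ) γ x)
  let F : IV →ₗ[A'] B ⊗[ℂ] V :=
    { toFun := F0, map_add' := hF0add, map_smul' := hFsmul }
  -- injectivity
  have hker : ∀ x : IV, F0 x = 0 → x = 0 := by
    intro x hx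
    have hzero : ∀ γ : G, cI x γ = 0 := by
      intro γ
      have h1 : P γ (F0 x) = Ifun γ (cI x γ) := by
        show P γ (∑ δ : G, T δ ⊗ₜ[ℂ] (Ifun δ (cI x δ))) = _
        rw [map_sum, Finset.sum_eq_single γ]
        · rw [hP, hcBT]; simp
        · intro b _ hb; rw [hP, hcBT]; simp [Ne.symm hb]
        · simp
      have h2 : Ifun γ (cI x γ) = Ifun γ 0 := by
        rw [← h1, hx, map_zero, map_zero]
      exact (Ifun γ).injective h2
    have := hcI x
    rw [this]
    simp [hzero]
  -- surjectivity
  have hrec : ∀ y : B ⊗[ℂ] V, (∑ γ : G, T γ ⊗ₜ[ℂ] (P γ y)) = y := by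
    intro y
    induction y using TensorProduct.induction_on with
    | zero => simp
    | tmul b w =>
        calc (∑ γ : G, T γ ⊗ₜ[ℂ] (P γ (b ⊗ₜ[ℂ] w)))
            = ∑ γ : G, (cB b γ • T γ) ⊗ₜ[ℂ] w :=
              Finset.sum_congr rfl (fun γ _ => by
                rw [hP]; exact (TensorProduct.smul_tmul _ _ _).symm)
          _ = (∑ γ : G, cB b γ • T γ) ⊗ₜ[ℂ] w := by rw [TensorProduct.sum_tmul]
          _ = b ⊗ₜ[ℂ] w := by rw [← hcB b]
    | add y₁ y₂ h₁ h₂ =>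
        simp only [map_add, TensorProduct.tmul_add, Finset.sum_add_distrib, h₁, h₂]
  have hsurj : ∀ y : B ⊗[ℂ] V, ∃ x : IV, F0 x = y := by
    intro y
    refine ⟨∑ γ : G, (g γ : A') • emb ((Ifun γ).symm (P γ y)), ?_⟩
    calc F0 (∑ γ : G, (g γ : A') • emb ((Ifun γ).symm (P γ y)))
        = ∑ γ : G, F0 ((g γ : A') • emb ((Ifun γ).symm (P γ y))) := hFsum _
      _ = ∑ γ : G, T γ ⊗ₜ[ℂ] (Ifun γ ((Ifun γ).symm (P γ y))) :=
          Finset.sum_congr rfl (fun γ _ => hF0basic _ _)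
      _ = ∑ γ : G, T γ ⊗ₜ[ℂ] (P γ y) := by simp
      _ = y := hrec y
  have hbij : Function.Bijective F :=
    ⟨(injective_iff_map_eq_zero F).mpr hker, fun y => hsurj y⟩
  exact ⟨LinearEquiv.ofBijective F hbij, fun γ v => hF0basic γ v⟩
end

section
/- (Clifford theory, exhaustion) Let A be a complex algebra and Γ a finite group acting on A by automorphisms. Every irreducible Γ⋉A-module N containing an irreducible A-submodule V is isomorphic to a direct summand of Ind_A^{Γ⋉A} V. -/
/-!
Frobenius reciprocity turns the embedding `V → N` into an `A'`-linear map `Ind V → N`, which is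
onto because `N` is simple, so `N ≅ Ind V ⧸ K` for its kernel `K`. The induced module is the sum
of the twisted copies `g γ • V`, hence semisimple over `A`; averaging an `A`-linear projection onto
`K` over `Γ` (Maschke's trick, using that `|Γ|` is invertible in `A'`) gives an `A'`-linear one,
whose kernel is an `A'`-complement of `K` isomorphic to `N`.
-/

theorem invOf_natCast_smul_comm {R M : Type*} [Ring R] [AddCommGroup M] [Module R M] (n : ℕ)
    [Invertible (n : R)] (r : R) (x : M) : ⅟(n : R) • r • x = r • ⅟(n : R) • x := by
  rw [smul_smul, smul_smul, ((Nat.cast_commute n r).invOf_left).eq]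

namespace CrossedProduct

variable {A A' Γ : Type*} [Ring A] [Ring A'] [Group Γ] {ψ : Γ →* RingAut A} {ι : A → A'}
  {g : Γ →* A'ˣ}

theorem ι_mul_g (hrel : ∀ γ a, (g γ : A') * ι a = ι (ψ γ a) * (g γ : A')) (γ : Γ) (a : A) :
    ι a * (g γ : A') = (g γ : A') * ι (ψ γ⁻¹ a) := by
  rw [hrel, ← RingAut.mul_apply, ← map_mul, mul_inv_cancel, map_one, RingAut.one_apply]

variable [Fintype Γ] {V M M₁ M₂ : Type*} [AddCommGroup V] [Module A V]
  [AddCommGroup M] [AddCommGroup M₁] [AddCommGroup M₂] [Module A' M] [Module A' M₁] [Module A' M₂]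

variable (g) in
/-- `M` is induced from `V` along `emb`, i.e. `M = ⨁ γ, g γ • emb V`, exactly when
`inducedSum g emb` is bijective. -/
def inducedSum (k : V →+ M) : (Γ → V) →+ M where
  toFun c := ∑ γ, (g γ : A') • k (c γ)
  map_zero' := by simp
  map_add' c d := by simp [smul_add, Finset.sum_add_distrib]

theorem inducedSum_apply (k : V →+ M) (c : Γ → V) :
    inducedSum g k c = ∑ γ, (g γ : A') • k (c γ) := rfl

theorem inducedSum_single [DecidableEq Γ] (k : V →+ M) (v : V) :
    inducedSum g k (Pi.single 1 v) = k v := by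
  rw [inducedSum_apply, Finset.sum_eq_single_of_mem 1 (Finset.mem_univ 1)]
  · simp
  · intro γ _ hγ
    simp [hγ]

theorem ι_smul_inducedSum (hrel : ∀ γ a, (g γ : A') * ι a = ι (ψ γ a) * (g γ : A'))
    (k : V →+ M) (hk : ∀ a v, k (a • v) = ι a • k v) (a : A) (c : Γ → V) :
    ι a • inducedSum g k c = inducedSum g k (fun γ => ψ γ⁻¹ a • c γ) := by
  simp only [inducedSum_apply, Finset.smul_sum, hk, smul_smul, ι_mul_g hrel]

theorem g_smul_inducedSum (k : V →+ M) (δ : Γ) (c : Γ → V) :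
    (g δ : A') • inducedSum g k c = inducedSum g k (fun γ => c (δ⁻¹ * γ)) := by
  simp only [inducedSum_apply, Finset.smul_sum, smul_smul, ← Units.val_mul, ← map_mul]
  exact Fintype.sum_equiv (Equiv.mulLeft δ) _ _ fun γ => by simp

variable (ι g) in
def linearMapOfCommute (hspan : ∀ r : A', ∃ c : Γ → A, r = ∑ γ, ι (c γ) * (g γ : A'))
    (f : M₁ →+ M₂) (hι : ∀ a x, f (ι a • x) = ι a • f x)
    (hg : ∀ γ x, f ((g γ : A') • x) = (g γ : A') • f x) : M₁ →ₗ[A'] M₂ where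
  __ := f
  map_smul' r x := by
    obtain ⟨c, rfl⟩ := hspan r
    simp only [Finset.sum_smul, mul_smul, map_sum, hg, hι, AddMonoidHom.toFun_eq_coe,
      RingHom.id_apply]

theorem exists_lift_of_bijective_inducedSum
    (hrel : ∀ γ a, (g γ : A') * ι a = ι (ψ γ a) * (g γ : A'))
    (hspan : ∀ r : A', ∃ c : Γ → A, r = ∑ γ, ι (c γ) * (g γ : A'))
    (emb : V →+ M) (hemb : ∀ a v, emb (a • v) = ι a • emb v)
    (hind : Function.Bijective (inducedSum g emb))
    (k : V →+ M₂) (hk : ∀ a v, k (a • v) = ι a • k v) :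
    ∃ φ : M →ₗ[A'] M₂, ∀ v, φ (emb v) = k v := by
  classical
  let e := AddEquiv.ofBijective _ hind
  let f : M →+ M₂ := (inducedSum g k).comp e.symm.toAddMonoidHom
  have hf : ∀ c, f (inducedSum g emb c) = inducedSum g k c := fun c =>
    congrArg (inducedSum g k) (e.symm_apply_apply c)
  refine ⟨linearMapOfCommute ι g hspan f (fun a x => ?_) (fun δ x => ?_), fun v => ?_⟩
  · obtain ⟨c, rfl⟩ := hind.2 x
    rw [ι_smul_inducedSum hrel emb hemb, hf, hf, ι_smul_inducedSum hrel k hk]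
  · obtain ⟨c, rfl⟩ := hind.2 x
    rw [g_smul_inducedSum, hf, hf, g_smul_inducedSum]
  · change f (emb v) = k v
    rw [← inducedSum_single (g := g) emb v, hf, inducedSum_single]

theorem isSemisimpleModule_of_bijective_inducedSum
    (hrel : ∀ γ a, (g γ : A') * ι a = ι (ψ γ a) * (g γ : A'))
    [Module A M] (hAM : ∀ (a : A) (x : M), a • x = ι a • x) [IsSemisimpleModule A V]
    (emb : V →+ M) (hemb : ∀ a v, emb (a • v) = ι a • emb v)
    (hind : Function.Bijective (inducedSum g emb)) : IsSemisimpleModule A M := by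
  classical
  have hemb_inj : Function.Injective emb := by
    have h := hind.1.comp (Pi.single_injective (M := fun _ : Γ => V) 1)
    simpa only [Function.comp_def, inducedSum_single] using h
  have hcomponent : ∀ γ : Γ, ∃ p : Submodule A M,
      IsSemisimpleModule A p ∧ ∀ v, (g γ : A') • emb v ∈ p := by
    intro γ
    let t : V →ₛₗ[(ψ γ : A →+* A)] M :=
      { toFun v := (g γ : A') • emb v
        map_add' v w := by rw [map_add, smul_add]
        map_smul' a v := by
          rw [hemb, smul_smul, hrel, mul_smul, RingHom.coe_coe, hAM] }
    have ht : Function.Injective t := fun v w h =>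
      hemb_inj ((g γ).isUnit.smul_left_cancel.mp h)
    refine ⟨LinearMap.range t, ?_, LinearMap.mem_range_self t⟩
    exact (t.rangeRestrict.isSemisimpleModule_iff_of_bijective
      ⟨t.injective_rangeRestrict_iff.mpr ht, t.surjective_rangeRestrict⟩).mp inferInstance
  choose p hp hmem using hcomponent
  refine isSemisimpleModule_of_isSemisimpleModule_submodule' hp (eq_top_iff.mpr fun x _ => ?_)
  obtain ⟨c, rfl⟩ := hind.2 x
  exact Submodule.sum_mem _ fun γ _ => Submodule.mem_iSup_of_mem γ (hmem γ (c γ))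

variable [Invertible (Fintype.card Γ : A')]

variable (g) in
def average (f : M₁ →+ M₂) : M₁ →+ M₂ where
  toFun x := ⅟(Fintype.card Γ : A') • ∑ γ, (g γ⁻¹ : A') • f ((g γ : A') • x)
  map_zero' := by simp
  map_add' x y := by simp [smul_add, Finset.sum_add_distrib]

theorem average_apply (f : M₁ →+ M₂) (x : M₁) :
    average g f x = ⅟(Fintype.card Γ : A') • ∑ γ, (g γ⁻¹ : A') • f ((g γ : A') • x) := rfl

theorem average_ι_smul (hrel : ∀ γ a, (g γ : A') * ι a = ι (ψ γ a) * (g γ : A'))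
    (f : M₁ →+ M₂) (hf : ∀ a x, f (ι a • x) = ι a • f x) (a : A) (x : M₁) :
    average g f (ι a • x) = ι a • average g f x := by
  have hterm : ∀ γ, (g γ⁻¹ : A') • f ((g γ : A') • ι a • x) =
      ι a • (g γ⁻¹ : A') • f ((g γ : A') • x) := fun γ => by
    rw [smul_smul, hrel, mul_smul, hf, smul_smul, smul_smul, ι_mul_g hrel, inv_inv]
  simp only [average_apply, hterm, ← Finset.smul_sum, invOf_natCast_smul_comm]

theorem average_g_smul (f : M₁ →+ M₂) (δ : Γ) (x : M₁) :
    average g f ((g δ : A') • x) = (g δ : A') • average g f x := by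
  have hsum : ∑ γ, (g γ⁻¹ : A') • f ((g γ : A') • (g δ : A') • x) =
      (g δ : A') • ∑ γ, (g γ⁻¹ : A') • f ((g γ : A') • x) := by
    rw [Finset.smul_sum]
    refine Fintype.sum_equiv (Equiv.mulRight δ) _ _ fun γ => ?_
    simp only [Equiv.coe_mulRight, smul_smul, ← Units.val_mul, ← map_mul, mul_inv_rev,
      mul_inv_cancel_left]
  rw [average_apply, hsum, invOf_natCast_smul_comm, average_apply]

theorem average_mem (K : Submodule A' M₂) (f : M₁ →+ M₂) (hf : ∀ x, f x ∈ K) (x : M₁) :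
    average g f x ∈ K :=
  K.smul_mem _ (K.sum_mem fun _ _ => K.smul_mem _ (hf _))

theorem average_apply_of_mem (K : Submodule A' M) (f : M →+ M) (hf : ∀ x ∈ K, f x = x)
    {x : M} (hx : x ∈ K) : average g f x = x := by
  have hterm : ∀ γ, (g γ⁻¹ : A') • f ((g γ : A') • x) = x := fun γ => by
    rw [hf _ (K.smul_mem _ hx), smul_smul, ← Units.val_mul, ← map_mul, inv_mul_cancel, map_one,
      Units.val_one, one_smul]
  rw [average_apply, Finset.sum_congr rfl fun γ _ => hterm γ, Finset.sum_const,
    Finset.card_univ, ← Nat.cast_smul_eq_nsmul A', smul_smul, invOf_mul_self, one_smul]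

theorem isSemisimpleModule_of_isSemisimpleModule_restrict
    (hrel : ∀ γ a, (g γ : A') * ι a = ι (ψ γ a) * (g γ : A'))
    (hspan : ∀ r : A', ∃ c : Γ → A, r = ∑ γ, ι (c γ) * (g γ : A'))
    [Module A M] (hAM : ∀ (a : A) (x : M), a • x = ι a • x) [IsSemisimpleModule A M] :
    IsSemisimpleModule A' M where
  exists_isCompl K := by
    let _ : SMul A A' := ⟨fun a r => ι a * r⟩
    have : IsScalarTower A A' M := ⟨fun a r x => by rw [hAM, ← mul_smul]; rfl⟩
    obtain ⟨W, hW⟩ := exists_isCompl (K.restrictScalars A)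
    let π := ((K.restrictScalars A).projection W hW).toAddMonoidHom
    have hπι : ∀ (a : A) x, π (ι a • x) = ι a • π x := fun a x => by
      simp only [π, LinearMap.toAddMonoidHom_coe, ← hAM, map_smul]
    let T := linearMapOfCommute ι g hspan (average g π) (average_ι_smul hrel π hπι)
      (average_g_smul π)
    have hTK : ∀ x, T x ∈ K := average_mem K π fun x => Submodule.projection_apply_mem hW x
    have hTid : ∀ x ∈ K, T x = x := fun x hx =>
      average_apply_of_mem K π (fun y hy => Submodule.projection_apply_of_mem_left hW hy) hx
    exact ⟨_, LinearMap.isCompl_of_proj (f := T.codRestrict K hTK) fun x =>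
      Subtype.ext (hTid x x.2)⟩

end CrossedProduct

theorem stmt11
    (A A' : Type u) [Ring A] [Ring A'] [Algebra ℂ A] [Algebra ℂ A']
    (Γ : Type u) [Group Γ] [Fintype Γ]
    (ψ : Γ →* RingAut A) (ι : A →ₐ[ℂ] A') (g : Γ →* A'ˣ)
    (hrel : ∀ (γ : Γ) (a : A), (g γ : A') * ι a = ι (ψ γ a) * (g γ : A'))
    (hbasis : ∀ x : A', ∃! c : Γ → A, x = ∑ γ : Γ, ι (c γ) * (g γ : A'))
    -- an irreducible A'-module N
    (N : Type u) [AddCommGroup N] [Module A' N] (hN : IsSimpleModule A' N)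
    -- an irreducible A-submodule V of N (an A-compatible embedding)
    (V : Type u) [AddCommGroup V] [Module A V] (hV : IsSimpleModule A V)
    (j : V →+ N) (hjinj : Function.Injective j)
    (hjA : ∀ (a : A) (v : V), j (a • v) = ι a • j v)
    -- the induced module Ind_A^{Γ⋉A} V, axiomatized
    (IV : Type u) [AddCommGroup IV] [Module A' IV]
    (emb : V →+ IV)
    (hembA : ∀ (a : A) (v : V), emb (a • v) = ι a • emb v)
    (hIbasis : ∀ x : IV, ∃! c : Γ → V, x = ∑ γ : Γ, (g γ : A') • emb (c γ)) :
    ∃ (P P' : Submodule A' IV), IsCompl P P' ∧ Nonempty (P ≃ₗ[A'] N) := by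
  let _ : Module A IV := Module.compHom IV (ι : A →+* A')
  have hspan : ∀ r : A', ∃ c : Γ → A, r = ∑ γ, ι (c γ) * (g γ : A') := fun r => (hbasis r).exists
  have hind : Function.Bijective (CrossedProduct.inducedSum g emb) :=
    (Function.bijective_iff_existsUnique _).mpr fun x => by
      simpa only [CrossedProduct.inducedSum_apply, eq_comm] using hIbasis x
  have hcard : (Fintype.card Γ : ℂ) ≠ 0 := Nat.cast_ne_zero.mpr Fintype.card_ne_zero
  let _ : Invertible (Fintype.card Γ : A') :=
    ((invertibleOfNonzero hcard).map (algebraMap ℂ A')).copy _ (map_natCast _ _).symm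
  have : IsSemisimpleModule A IV :=
    CrossedProduct.isSemisimpleModule_of_bijective_inducedSum hrel (fun _ _ => rfl) emb hembA hind
  have : IsSemisimpleModule A' IV :=
    CrossedProduct.isSemisimpleModule_of_isSemisimpleModule_restrict hrel hspan (fun _ _ => rfl)
  obtain ⟨φ, hφ⟩ :=
    CrossedProduct.exists_lift_of_bijective_inducedSum hrel hspan emb hembA hind j hjA
  have hφ_surj : Function.Surjective φ := by
    have := IsSimpleModule.nontrivial A V
    obtain ⟨v, hv⟩ := exists_ne (0 : V)
    refine LinearMap.surjective_of_ne_zero fun h => hv (hjinj ?_)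
    rw [map_zero, ← hφ, h, LinearMap.zero_apply]
  obtain ⟨P, hP⟩ := exists_isCompl (LinearMap.ker φ)
  exact ⟨P, LinearMap.ker φ, hP.symm,
    ⟨(Submodule.quotientEquivOfIsCompl _ _ hP).symm.trans (φ.quotKerEquivOfSurjective hφ_surj)⟩⟩
end

section
/- (Clifford theory, linkage) Let A be a complex algebra, Γ a finite group acting on A by automorphisms ψ_γ, and (π, V_π), (ρ, V_ρ) irreducible A-modules of countable dimension. If Ind_A^{Γ⋉A} V_π and Ind_A^{Γ⋉A} V_ρ have a common irreducible Γ⋉A-summand, then there exists γ ∈ Γ such that π∘ψ_γ^{-1} ≅ ρ, and the induced modules Ind_A^{Γ⋉A} V_π and Ind_A^{Γ⋉A} V_ρ are isomorphic as Γ⋉A-modules. -/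
/-!
A common summand of `Iπ` and `Iρ` gives a nonzero `A'`-linear map `φ : Iπ → Iρ`. Since `Iπ` is
generated by `Vπ` over the units `g γ`, `φ` is nonzero on `Vπ`, and some coordinate of
`Iρ = ⊕_δ g δ • Vρ` of `φ ∘ embπ` is then a nonzero map `Vπ → Vρ` which is semilinear over `ψ δ⁻¹`;
Schur's lemma makes it bijective. Conversely, a bijection `f : Vπ → Vρ` with
`f ((ψ γ)⁻¹ a • v) = a • f v` induces `∑ g δ • embπ (c δ) ↦ ∑ g δ • embρ (f (c (δ * γ)))`,
which commutes with every `ι a` and `g δ`, hence with all of `A'`.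
-/

universe u

open Function

theorem LinearMap.bijective_of_ne_zero_semilinear {R S M N : Type*} [Ring R] [Ring S]
    {σ : R →+* S} [RingHomSurjective σ] [AddCommGroup M] [Module R M] [AddCommGroup N]
    [Module S N] [IsSimpleModule R M] [IsSimpleModule S N] {f : M →ₛₗ[σ] N} (h : f ≠ 0) :
    Bijective f := by
  refine ⟨?_, ?_⟩
  · rw [← LinearMap.ker_eq_bot]
    exact (eq_bot_or_eq_top _).resolve_right fun h' => h (LinearMap.ker_eq_top.1 h')
  · rw [← LinearMap.range_eq_top]
    exact (eq_bot_or_eq_top _).resolve_left fun h' => h (LinearMap.range_eq_bot.1 h')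

theorem Submodule.exists_linearMap_ne_zero_of_isCompl {R M N : Type*} [Ring R]
    [AddCommGroup M] [Module R M] [AddCommGroup N] [Module R N] {P P' : Submodule R M}
    (hP : IsCompl P P') [Nontrivial P] {Q : Submodule R N} (e : P ≃ₗ[R] Q) :
    ∃ φ : M →ₗ[R] N, φ ≠ 0 := by
  obtain ⟨p, hp⟩ := exists_ne (0 : P)
  refine ⟨Q.subtype ∘ₗ e.toLinearMap ∘ₗ P.projectionOnto P' hP, fun h => hp ?_⟩
  simpa [Submodule.projectionOnto_apply_left] using LinearMap.congr_fun h p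

theorem map_smul_of_map_smul_generators {A A' Γ M N : Type*} [Ring A'] [Fintype Γ]
    [AddCommGroup M] [Module A' M] [AddCommGroup N] [Module A' N] {ι : A → A'} {g : Γ → A'}
    (hspan : ∀ x : A', ∃ c : Γ → A, x = ∑ γ, ι (c γ) * g γ) (F : M →+ N)
    (hι : ∀ a x, F (ι a • x) = ι a • F x) (hg : ∀ γ x, F (g γ • x) = g γ • F x)
    (x' : A') (x : M) : F (x' • x) = x' • F x := by
  obtain ⟨c, rfl⟩ := hspan x'
  simp [Finset.sum_smul, mul_smul, hι, hg]

section InducedModule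

variable {A A' Γ V W I J : Type*} [Ring A] [Ring A'] [Group Γ] [Fintype Γ]
  [AddCommGroup V] [Module A V] [AddCommGroup W] [Module A W]
  [AddCommGroup I] [Module A' I] [AddCommGroup J] [Module A' J]
  {ψ : Γ →* RingAut A} {ι : A → A'} {g : Γ →* A'ˣ}

variable (g) in
def inducedSum (emb : V →+ I) : (Γ → V) →+ I where
  toFun c := ∑ γ, (g γ : A') • emb (c γ)
  map_zero' := by simp
  map_add' c d := by simp [smul_add, Finset.sum_add_distrib]

theorem bijective_inducedSum {emb : V →+ I}
    (h : ∀ x : I, ∃! c : Γ → V, x = ∑ γ, (g γ : A') • emb (c γ)) :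
    Bijective (inducedSum g emb) :=
  (bijective_iff_existsUnique _).2 fun x => by simpa [inducedSum, eq_comm] using h x

theorem units_smul_inducedSum (emb : V →+ I) (δ : Γ) (c : Γ → V) :
    (g δ : A') • inducedSum g emb c = inducedSum g emb fun γ => c (δ⁻¹ * γ) := by
  simp only [inducedSum, AddMonoidHom.coe_mk, ZeroHom.coe_mk, Finset.smul_sum, smul_smul]
  refine Fintype.sum_equiv (Equiv.mulLeft δ) _ _ fun γ => ?_
  simp [← Units.val_mul, ← map_mul]

theorem smul_inducedSum (hrel : ∀ γ a, (g γ : A') * ι a = ι (ψ γ a) * g γ) {emb : V →+ I}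
    (hemb : ∀ a v, emb (a • v) = ι a • emb v) (a : A) (c : Γ → V) :
    ι a • inducedSum g emb c = inducedSum g emb fun γ => ψ γ⁻¹ a • c γ := by
  simp only [inducedSum, AddMonoidHom.coe_mk, ZeroHom.coe_mk, Finset.smul_sum, smul_smul]
  refine Finset.sum_congr rfl fun γ _ => ?_
  have hcomm : ι a * g γ = g γ * ι (ψ γ⁻¹ a) := by
    rw [hrel, map_inv, RingAut.inv_apply, RingEquiv.apply_symm_apply]
  rw [hcomm, ← smul_smul, hemb]

theorem exists_map_ne_zero_of_surjective_inducedSum {emb : V →+ I}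
    (hs : Surjective (inducedSum g emb)) {φ : I →ₗ[A'] J} (hφ : φ ≠ 0) :
    ∃ v, φ (emb v) ≠ 0 := by
  by_contra! h
  refine hφ (LinearMap.ext fun x => ?_)
  obtain ⟨c, rfl⟩ := hs x
  simp [inducedSum, h]

section Coordinates

variable {emb : V →+ I} (hb : Bijective (inducedSum g emb))

noncomputable def inducedCoords : I ≃+ (Γ → V) := (AddEquiv.ofBijective _ hb).symm

theorem inducedSum_inducedCoords (x : I) : inducedSum g emb (inducedCoords hb x) = x :=
  (AddEquiv.ofBijective _ hb).apply_symm_apply x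

theorem inducedCoords_inducedSum (c : Γ → V) : inducedCoords hb (inducedSum g emb c) = c :=
  (AddEquiv.ofBijective _ hb).symm_apply_apply c

theorem inducedCoords_smul (hrel : ∀ γ a, (g γ : A') * ι a = ι (ψ γ a) * g γ)
    (hemb : ∀ a v, emb (a • v) = ι a • emb v) (a : A) (x : I) :
    inducedCoords hb (ι a • x) = fun γ => ψ γ⁻¹ a • inducedCoords hb x γ := by
  apply hb.1
  rw [inducedSum_inducedCoords, ← smul_inducedSum hrel hemb, inducedSum_inducedCoords]

end Coordinates

theorem exists_twisted_addEquiv_of_linearMap_ne_zero [IsSimpleModule A V] [IsSimpleModule A W]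
    (hrel : ∀ γ a, (g γ : A') * ι a = ι (ψ γ a) * g γ)
    {embV : V →+ I} (hembV : ∀ a v, embV (a • v) = ι a • embV v)
    {embW : W →+ J} (hembW : ∀ a w, embW (a • w) = ι a • embW w)
    (hV : Surjective (inducedSum g embV)) (hW : Bijective (inducedSum g embW))
    {φ : I →ₗ[A'] J} (hφ : φ ≠ 0) :
    ∃ (γ : Γ) (f : V ≃+ W), ∀ a v, f ((ψ γ)⁻¹ a • v) = a • f v := by
  obtain ⟨v, hv⟩ := exists_map_ne_zero_of_surjective_inducedSum hV hφ
  obtain ⟨δ, hδ⟩ : ∃ δ, inducedCoords hW (φ (embV v)) δ ≠ 0 := by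
    by_contra! h
    exact hv ((inducedCoords hW).map_eq_zero_iff.1 (funext h))
  let T : V →ₛₗ[(ψ δ⁻¹ : A →+* A)] W :=
    { toFun := fun v => inducedCoords hW (φ (embV v)) δ
      map_add' := by simp
      map_smul' := fun a v => by simp [hembV, inducedCoords_smul hW hrel hembW] }
  have hT : Bijective T :=
    LinearMap.bijective_of_ne_zero_semilinear fun h => hδ (LinearMap.congr_fun h v)
  refine ⟨δ⁻¹, AddEquiv.ofBijective T hT, fun a v => ?_⟩
  simp [T.map_smulₛₗ, RingAut.inv_apply]

theorem nonempty_linearEquiv_of_twisted_addEquiv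
    (hbasis : ∀ x : A', ∃ c : Γ → A, x = ∑ γ, ι (c γ) * g γ)
    (hrel : ∀ γ a, (g γ : A') * ι a = ι (ψ γ a) * g γ)
    {embV : V →+ I} (hembV : ∀ a v, embV (a • v) = ι a • embV v)
    {embW : W →+ J} (hembW : ∀ a w, embW (a • w) = ι a • embW w)
    (hV : Bijective (inducedSum g embV)) (hW : Bijective (inducedSum g embW))
    {γ : Γ} (f : V ≃+ W) (hf : ∀ a v, f ((ψ γ)⁻¹ a • v) = a • f v) :
    Nonempty (I ≃ₗ[A'] J) := by
  let E : I ≃+ J := (inducedCoords hV).trans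
    ((AddEquiv.arrowCongr (Equiv.mulRight γ).symm f).trans (AddEquiv.ofBijective _ hW))
  have hE (c : Γ → V) : E (inducedSum g embV c) = inducedSum g embW fun δ => f (c (δ * γ)) := by
    simp only [E, AddEquiv.trans_apply, inducedCoords_inducedSum]
    rfl
  have hf' (δ : Γ) (a : A) (v : V) : f (ψ (δ * γ)⁻¹ a • v) = ψ δ⁻¹ a • f v := by
    rw [mul_inv_rev, map_mul, RingAut.mul_apply, map_inv, hf]
  refine ⟨E.toLinearEquiv (map_smul_of_map_smul_generators hbasis E.toAddMonoidHom ?_ ?_)⟩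
  · intro a x
    obtain ⟨c, rfl⟩ := hV.2 x
    simp only [AddEquiv.coe_toAddMonoidHom, smul_inducedSum hrel hembV,
      smul_inducedSum hrel hembW, hE, hf']
  · intro ε x
    obtain ⟨c, rfl⟩ := hV.2 x
    simp only [AddEquiv.coe_toAddMonoidHom, units_smul_inducedSum, hE, mul_assoc]

end InducedModule

theorem stmt12_general
    (A A' : Type u) [Ring A] [Ring A'] [Algebra ℂ A] [Algebra ℂ A']
    (Γ : Type u) [Group Γ] [Fintype Γ]
    (ψ : Γ →* RingAut A) (ι : A →ₐ[ℂ] A') (g : Γ →* A'ˣ)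
    (hrel : ∀ (γ : Γ) (a : A), (g γ : A') * ι a = ι (ψ γ a) * (g γ : A'))
    (hbasis : ∀ x : A', ∃! c : Γ → A, x = ∑ γ : Γ, ι (c γ) * (g γ : A'))
    -- two irreducible A-modules of countable dimension
    (Vπ Vρ : Type u) [AddCommGroup Vπ] [Module A Vπ] [AddCommGroup Vρ] [Module A Vρ]
    (hVπ : IsSimpleModule A Vπ) (hVρ : IsSimpleModule A Vρ)
    -- the induced modules, axiomatized
    (Iπ : Type u) [AddCommGroup Iπ] [Module A' Iπ] (embπ : Vπ →+ Iπ)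
    (hembπ : ∀ (a : A) (v : Vπ), embπ (a • v) = ι a • embπ v)
    (hIπ : ∀ x : Iπ, ∃! c : Γ → Vπ, x = ∑ γ : Γ, (g γ : A') • embπ (c γ))
    (Iρ : Type u) [AddCommGroup Iρ] [Module A' Iρ] (embρ : Vρ →+ Iρ)
    (hembρ : ∀ (a : A) (v : Vρ), embρ (a • v) = ι a • embρ v)
    (hIρ : ∀ x : Iρ, ∃! c : Γ → Vρ, x = ∑ γ : Γ, (g γ : A') • embρ (c γ))
    -- common irreducible direct summand
    (hcommon : ∃ (P P' : Submodule A' Iπ) (Q Q' : Submodule A' Iρ),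
      IsCompl P P' ∧ IsCompl Q Q' ∧ IsSimpleModule A' P ∧ Nonempty (P ≃ₗ[A'] Q)) :
    (∃ (γ : Γ) (f : Vπ ≃+ Vρ), ∀ (a : A) (v : Vπ),
        f (((ψ γ)⁻¹ a) • v) = a • f v) ∧
    Nonempty (Iπ ≃ₗ[A'] Iρ) := by
  obtain ⟨P, P', Q, -, hPP', -, hP, ⟨e⟩⟩ := hcommon
  have : Nontrivial P := IsSimpleModule.nontrivial A' P
  obtain ⟨φ, hφ⟩ := Submodule.exists_linearMap_ne_zero_of_isCompl hPP' e
  have hπ := bijective_inducedSum hIπ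
  have hρ := bijective_inducedSum hIρ
  obtain ⟨γ, f, hf⟩ :=
    exists_twisted_addEquiv_of_linearMap_ne_zero hrel hembπ hembρ hπ.2 hρ hφ
  exact ⟨⟨γ, f, hf⟩, nonempty_linearEquiv_of_twisted_addEquiv (fun x => (hbasis x).exists)
    hrel hembπ hembρ hπ hρ f hf⟩

theorem stmt12
    (A A' : Type u) [Ring A] [Ring A'] [Algebra ℂ A] [Algebra ℂ A']
    (Γ : Type u) [Group Γ] [Fintype Γ]
    (ψ : Γ →* RingAut A) (ι : A →ₐ[ℂ] A') (g : Γ →* A'ˣ)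
    (hrel : ∀ (γ : Γ) (a : A), (g γ : A') * ι a = ι (ψ γ a) * (g γ : A'))
    (hbasis : ∀ x : A', ∃! c : Γ → A, x = ∑ γ : Γ, ι (c γ) * (g γ : A'))
    -- two irreducible A-modules of countable dimension
    (Vπ Vρ : Type u) [AddCommGroup Vπ] [Module A Vπ] [AddCommGroup Vρ] [Module A Vρ]
    [Module ℂ Vπ] [IsScalarTower ℂ A Vπ] [Module ℂ Vρ] [IsScalarTower ℂ A Vρ]
    (hVπ : IsSimpleModule A Vπ) (hVρ : IsSimpleModule A Vρ)
    (hcountπ : ∃ sπ : Set Vπ, sπ.Countable ∧ Submodule.span ℂ sπ = ⊤)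
    (hcountρ : ∃ sρ : Set Vρ, sρ.Countable ∧ Submodule.span ℂ sρ = ⊤)
    -- the induced modules, axiomatized
    (Iπ : Type u) [AddCommGroup Iπ] [Module A' Iπ] (embπ : Vπ →+ Iπ)
    (hembπ : ∀ (a : A) (v : Vπ), embπ (a • v) = ι a • embπ v)
    (hIπ : ∀ x : Iπ, ∃! c : Γ → Vπ, x = ∑ γ : Γ, (g γ : A') • embπ (c γ))
    (Iρ : Type u) [AddCommGroup Iρ] [Module A' Iρ] (embρ : Vρ →+ Iρ)
    (hembρ : ∀ (a : A) (v : Vρ), embρ (a • v) = ι a • embρ v)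
    (hIρ : ∀ x : Iρ, ∃! c : Γ → Vρ, x = ∑ γ : Γ, (g γ : A') • embρ (c γ))
    -- common irreducible direct summand
    (hcommon : ∃ (P P' : Submodule A' Iπ) (Q Q' : Submodule A' Iρ),
      IsCompl P P' ∧ IsCompl Q Q' ∧ IsSimpleModule A' P ∧ Nonempty (P ≃ₗ[A'] Q)) :
    (∃ (γ : Γ) (f : Vπ ≃+ Vρ), ∀ (a : A) (v : Vπ),
        f (((ψ γ)⁻¹ a) • v) = a • f v) ∧
    Nonempty (Iπ ≃ₗ[A'] Iρ) :=
  stmt12_general A A' Γ ψ ι g hrel hbasis Vπ Vρ hVπ hVρ Iπ embπ hembπ hIπ Iρ embρ hembρ hIρ hcommon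
end

section
/- Let A be a ring, Γ a finite group acting on A by automorphisms, and V any A-module. The irreducible quotients of the Γ⋉A-module Ind_A^{Γ⋉A} V are exactly the irreducible direct summands of the modules Ind_A^{Γ⋉A} Q, where Q runs over the irreducible quotient A-modules of V. -/
/-!
Frobenius reciprocity identifies `Γ ⋉ A`-maps `Ind Q → N` with `A`-maps `Q → N`. A simple
`Γ ⋉ A`-module `N` is semisimple over `A` (Clifford): the `Γ`-translates of a maximal
`A`-submodule are maximal and meet in a `Γ ⋉ A`-submodule, hence in `0`, so `N` embeds in a
finite product of simple `A`-modules. Therefore a surjection `Ind V → N` restricts to a nonzero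
`A`-map `V → N`, which factors through a simple quotient `Q = V/m` embedded in `N`. Its Frobenius
transpose `Ind Q → N` is onto, and it splits because `Ind Q = ⊕ g γ • Q` is semisimple over `A`,
hence over `Γ ⋉ A` by Maschke's averaging over `Γ`. Conversely, `Ind (V/m)` is the quotient of
`Ind V` by the elements all of whose coefficients lie in `m`, so its direct summands are quotients
of `Ind V`.
-/

universe u

open Finset

attribute [local instance] RingHomInvPair.of_ringEquiv RingHomInvPair.of_ringEquiv_symm

section Units

variable {A' Γ M : Type*} [Ring A'] [Group Γ] [AddCommGroup M] [Module A' M] (g : Γ →* A'ˣ)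

theorem map_units_smul_smul (γ δ : Γ) (x : M) :
    (g γ : A') • (g δ : A') • x = (g (γ * δ) : A') • x := by
  rw [smul_smul, ← Units.val_mul, ← map_mul]

theorem map_units_smul_inv_smul (γ : Γ) (x : M) : (g γ : A') • (g γ⁻¹ : A') • x = x := by
  rw [map_units_smul_smul, mul_inv_cancel, map_one, Units.val_one, one_smul]

theorem map_units_inv_smul_smul (γ : Γ) (x : M) : (g γ⁻¹ : A') • (g γ : A') • x = x := by
  rw [map_units_smul_smul, inv_mul_cancel, map_one, Units.val_one, one_smul]

theorem sum_map_units_smul_mul [Fintype Γ] (δ : Γ) (F : Γ → M) :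
    ∑ γ, (g γ : A') • F (δ⁻¹ * γ) = (g δ : A') • ∑ γ, (g γ : A') • F γ := by
  rw [smul_sum, ← Equiv.sum_comp (Equiv.mulLeft δ)]
  simp only [Equiv.coe_mulLeft, inv_mul_cancel_left, map_units_smul_smul]

theorem sum_map_units_smul_single [Fintype Γ] [DecidableEq Γ] {Q : Type*} [AddCommGroup Q]
    (f : Q →+ M) (q : Q) : ∑ γ, (g γ : A') • f ((Pi.single (1 : Γ) q : Γ → Q) γ) = f q := by
  rw [Fintype.sum_eq_single 1 fun γ hγ => by simp [hγ]]
  simp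

end Units

/-- `ι` and `g` exhibit `A'` as a quotient of the crossed product `Γ ⋉ A`. -/
structure CrossedGenerators {A A' Γ : Type*} [Ring A] [Ring A'] [Group Γ] [Fintype Γ]
    (ψ : Γ →* RingAut A) (ι : A →+* A') (g : Γ →* A'ˣ) : Prop where
  g_mul_ι : ∀ (γ : Γ) (a : A), (g γ : A') * ι a = ι (ψ γ a) * g γ
  exists_eq_sum : ∀ x : A', ∃ c : Γ → A, x = ∑ γ, ι (c γ) * g γ

namespace CrossedGenerators

variable {A A' Γ M : Type*} [Ring A] [Ring A'] [Group Γ] [Fintype Γ] [AddCommGroup M]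
  [Module A' M] {ψ : Γ →* RingAut A} {ι : A →+* A'} {g : Γ →* A'ˣ}
  (hA : CrossedGenerators ψ ι g)
include hA

theorem g_smul_ι_smul (γ : Γ) (a : A) (x : M) :
    (g γ : A') • ι a • x = ι (ψ γ a) • (g γ : A') • x := by
  rw [smul_smul, smul_smul, hA.g_mul_ι]

theorem ι_smul_g_smul (γ : Γ) (a : A) (x : M) :
    ι a • (g γ : A') • x = (g γ : A') • ι (ψ γ⁻¹ a) • x := by
  rw [hA.g_smul_ι_smul]
  simp [map_inv]

def toSubmodule (p : AddSubgroup M) (hι : ∀ (a : A), ∀ x ∈ p, ι a • x ∈ p)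
    (hg : ∀ γ : Γ, ∀ x ∈ p, (g γ : A') • x ∈ p) : Submodule A' M where
  toAddSubmonoid := p.toAddSubmonoid
  smul_mem' a' x hx := by
    obtain ⟨c, rfl⟩ := hA.exists_eq_sum a'
    simp only [sum_smul, mul_smul]
    exact p.sum_mem fun γ _ => hι _ _ (hg γ x hx)

theorem mem_toSubmodule {p : AddSubgroup M} {hι} {hg} {x : M} :
    x ∈ hA.toSubmodule p hι hg ↔ x ∈ p :=
  Iff.rfl

def linearMap {N : Type*} [AddCommGroup N] [Module A' N] (f : M →+ N)
    (hι : ∀ (a : A) (x : M), f (ι a • x) = ι a • f x)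
    (hg : ∀ (γ : Γ) (x : M), f ((g γ : A') • x) = (g γ : A') • f x) : M →ₗ[A'] N where
  toFun := f
  map_add' := f.map_add
  map_smul' a' x := by
    obtain ⟨c, rfl⟩ := hA.exists_eq_sum a'
    simp only [sum_smul, mul_smul, map_sum, hι, hg, RingHom.id_apply]

theorem linearMap_apply {N : Type*} [AddCommGroup N] [Module A' N] (f : M →+ N) {hι} {hg}
    (x : M) : hA.linearMap f hι hg x = f x :=
  rfl

section Restrict

variable [Module A M] (hsmul : ∀ (a : A) (x : M), a • x = ι a • x)
include hsmul

def smulEquiv (γ : Γ) : M ≃ₛₗ[((ψ γ : A ≃+* A) : A →+* A)] M where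
  toFun x := (g γ : A') • x
  invFun x := (g γ⁻¹ : A') • x
  map_add' := smul_add _
  map_smul' a x := by simp only [hsmul, hA.g_smul_ι_smul, RingEquiv.coe_toRingHom]
  left_inv := map_units_inv_smul_smul g γ
  right_inv := map_units_smul_inv_smul g γ

theorem smulEquiv_apply (γ : Γ) (x : M) : hA.smulEquiv hsmul γ x = (g γ : A') • x :=
  rfl

theorem smulEquiv_symm_apply (γ : Γ) (x : M) :
    (hA.smulEquiv hsmul γ).symm x = (g γ⁻¹ : A') • x :=
  rfl

theorem eq_bot_or_eq_top_of_smul_mem [IsSimpleModule A' M] (p : Submodule A M)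
    (hp : ∀ γ : Γ, ∀ x ∈ p, (g γ : A') • x ∈ p) : p = ⊥ ∨ p = ⊤ := by
  have hι : ∀ (a : A), ∀ x ∈ p.toAddSubgroup, ι a • x ∈ p.toAddSubgroup := fun a x hx => by
    rw [← hsmul]; exact p.smul_mem a hx
  rcases eq_bot_or_eq_top (hA.toSubmodule p.toAddSubgroup hι hp) with h | h
  · left; ext x; simpa [hA.mem_toSubmodule] using SetLike.ext_iff.mp h x
  · right; ext x; simpa [hA.mem_toSubmodule] using SetLike.ext_iff.mp h x

theorem finite_of_span_singleton_eq_top {n : M} (hn : Submodule.span A' {n} = ⊤) :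
    Module.Finite A M := by
  classical
  refine ⟨⟨univ.image fun γ => (g γ : A') • n, eq_top_iff.mpr fun x _ => ?_⟩⟩
  obtain ⟨a', rfl⟩ := Submodule.mem_span_singleton.mp (hn ▸ Submodule.mem_top :
    x ∈ Submodule.span A' {n})
  obtain ⟨c, rfl⟩ := hA.exists_eq_sum a'
  simp only [sum_smul, mul_smul, ← hsmul]
  exact Submodule.sum_mem _ fun γ _ =>
    Submodule.smul_mem _ _ (Submodule.subset_span (by simp))

def average (f : M →ₗ[A] M) : M →ₗ[A'] M :=
  let F : M →ₗ[A] M := ∑ γ, (hA.smulEquiv hsmul γ).toLinearMap ∘ₛₗ f ∘ₛₗ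
    (hA.smulEquiv hsmul γ).symm.toLinearMap
  hA.linearMap F.toAddMonoidHom
    (fun a x => by simp only [LinearMap.toAddMonoidHom_coe, ← hsmul, map_smul])
    fun δ x => by
      simp only [F, LinearMap.toAddMonoidHom_coe, LinearMap.sum_apply, LinearMap.coe_comp,
        LinearEquiv.coe_coe, Function.comp_apply, smulEquiv_apply, smulEquiv_symm_apply]
      rw [← sum_map_units_smul_mul]
      simp only [map_units_smul_smul, mul_inv_rev, inv_inv]

theorem average_apply (f : M →ₗ[A] M) (x : M) :
    hA.average hsmul f x = ∑ γ, (g γ : A') • f ((g γ⁻¹ : A') • x) := by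
  simp [average, linearMap_apply, smulEquiv_apply, smulEquiv_symm_apply]

theorem isSemisimpleModule_of_restrictScalars (hΓ : IsUnit (Fintype.card Γ : A'))
    [IsSemisimpleModule A M] : IsSemisimpleModule A' M := by
  refine (isSemisimpleModule_iff A' M).mpr ⟨fun U => ?_⟩
  let UA : Submodule A M :=
    { U.toAddSubmonoid with smul_mem' := fun a x hx => by rw [hsmul]; exact U.smul_mem _ hx }
  obtain ⟨C, hC⟩ := exists_isCompl UA
  obtain ⟨u, hu⟩ := hΓ
  have hcomm (a' : A') : Commute (↑u⁻¹ : A') a' := (hu ▸ Nat.cast_commute _ a').units_inv_left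
  let scale : M →ₗ[A'] M :=
    { toFun := (((u⁻¹ : A'ˣ) : A') • ·)
      map_add' := smul_add _
      map_smul' a' x := by simp only [smul_smul, (hcomm a').eq, RingHom.id_apply] }
  let π := hA.average hsmul (UA.projection C hC)
  have hπ_mem (x : M) : π x ∈ U := by
    rw [hA.average_apply]
    exact U.sum_mem fun γ _ => U.smul_mem _ (UA.projection_apply_mem hC _)
  have hπ_fix (x : U) : π x = (Fintype.card Γ : A') • (x : M) := by
    have hxU (γ : Γ) : (g γ⁻¹ : A') • (x : M) ∈ UA := U.smul_mem _ x.2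
    simp only [π, hA.average_apply, UA.projection_apply_of_mem_left hC (hxU _),
      map_units_smul_inv_smul, sum_const, card_univ, Nat.cast_smul_eq_nsmul]
  let P : M →ₗ[A'] U := (scale ∘ₗ π).codRestrict U fun x => U.smul_mem _ (hπ_mem x)
  refine ⟨LinearMap.ker P, LinearMap.isCompl_of_proj fun x => Subtype.ext ?_⟩
  simp only [P, LinearMap.codRestrict_apply, LinearMap.comp_apply, hπ_fix, ← hu]
  exact inv_smul_smul u _

theorem isSemisimpleModule_restrictScalars [IsSimpleModule A' M] : IsSemisimpleModule A M := by
  have := IsSimpleModule.nontrivial A' M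
  obtain ⟨n, hn⟩ := exists_ne (0 : M)
  have := hA.finite_of_span_singleton_eq_top hsmul (IsSimpleModule.span_singleton_eq_top A' hn)
  obtain ⟨m, hm, -⟩ := (eq_top_or_exists_le_coatom (⊥ : Submodule A M)).resolve_left bot_ne_top
  let T (γ : Γ) : Submodule A M := m.comap (hA.smulEquiv hsmul γ).toLinearMap
  have hT (γ : Γ) : IsCoatom (T γ) :=
    ((Submodule.orderIsoMapComap (hA.smulEquiv hsmul γ)).symm.isCoatom_iff m).mpr hm
  have hbot : ⨅ γ, T γ = ⊥ := by
    refine (hA.eq_bot_or_eq_top_of_smul_mem hsmul _ fun δ x hx => ?_).resolve_right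
      fun htop => hm.1 (eq_top_iff.mpr fun x _ => ?_)
    · simp only [Submodule.mem_iInf, T, Submodule.mem_comap, LinearEquiv.coe_coe,
        smulEquiv_apply, map_units_smul_smul] at hx ⊢
      exact fun γ => hx (γ * δ)
    · have := Submodule.mem_iInf T |>.mp (htop ▸ Submodule.mem_top : x ∈ ⨅ γ, T γ) 1
      simpa [T, smulEquiv_apply] using this
  have (γ : Γ) : IsSimpleModule A (M ⧸ T γ) := isSimpleModule_iff_isCoatom.mpr (hT γ)
  refine .of_injective (LinearMap.pi fun γ => (T γ).mkQ) ?_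
  rw [← LinearMap.ker_eq_bot, LinearMap.ker_pi]
  simpa using hbot

end Restrict

end CrossedGenerators

/-- `IQ = Ind Q = (Γ ⋉ A) ⊗_A Q`, described as the direct sum of the translates `g γ • emb Q`. -/
structure IsInduced {A A' Γ Q IQ : Type*} [Ring A] [Ring A'] [Group Γ] [Fintype Γ]
    [AddCommGroup Q] [Module A Q] [AddCommGroup IQ] [Module A' IQ]
    (ι : A →+* A') (g : Γ →* A'ˣ) (emb : Q →+ IQ) : Prop where
  emb_smul : ∀ (a : A) (q : Q), emb (a • q) = ι a • emb q
  existsUnique_eq_sum : ∀ x : IQ, ∃! c : Γ → Q, x = ∑ γ, (g γ : A') • emb (c γ)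

namespace IsInduced

variable {A A' Γ Q IQ : Type*} [Ring A] [Ring A'] [Group Γ] [Fintype Γ]
  [AddCommGroup Q] [Module A Q] [AddCommGroup IQ] [Module A' IQ]
  {ι : A →+* A'} {g : Γ →* A'ˣ} {emb : Q →+ IQ} (hI : IsInduced ι g emb)
include hI

def sumEmb (g : Γ →* A'ˣ) (emb : Q →+ IQ) : (Γ → Q) →+ IQ where
  toFun c := ∑ γ, (g γ : A') • emb (c γ)
  map_zero' := by simp
  map_add' c d := by simp only [Pi.add_apply, map_add, smul_add, sum_add_distrib]

omit hI in
theorem sumEmb_apply (c : Γ → Q) : sumEmb g emb c = ∑ γ, (g γ : A') • emb (c γ) :=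
  rfl

theorem bijective_sumEmb : Function.Bijective (sumEmb g emb) :=
  (Function.bijective_iff_existsUnique _).mpr fun x => by
    simpa only [sumEmb_apply, eq_comm] using hI.existsUnique_eq_sum x

noncomputable def coeff : IQ ≃+ (Γ → Q) :=
  (AddEquiv.ofBijective (sumEmb g emb) hI.bijective_sumEmb).symm

theorem sum_coeff (x : IQ) : ∑ γ, (g γ : A') • emb (hI.coeff x γ) = x :=
  (AddEquiv.ofBijective _ hI.bijective_sumEmb).apply_symm_apply x

theorem coeff_sum (c : Γ → Q) : hI.coeff (∑ γ, (g γ : A') • emb (c γ)) = c :=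
  (AddEquiv.ofBijective _ hI.bijective_sumEmb).symm_apply_apply c

theorem coeff_emb [DecidableEq Γ] (q : Q) : hI.coeff (emb q) = Pi.single 1 q := by
  conv_lhs => rw [← sum_map_units_smul_single g emb q]
  exact hI.coeff_sum _

theorem emb_injective : Function.Injective emb := fun q q' h => by
  classical
  simpa [hI.coeff_emb] using congrFun (congrArg hI.coeff h) 1

theorem coeff_g_smul (δ : Γ) (x : IQ) (γ : Γ) :
    hI.coeff ((g δ : A') • x) γ = hI.coeff x (δ⁻¹ * γ) := by
  conv_lhs => rw [← hI.sum_coeff x, ← sum_map_units_smul_mul, hI.coeff_sum]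

section Restrict

variable {N : Type*} [AddCommGroup N] [Module A' N] [Module A N]
  (hsmul : ∀ (a : A) (x : N), a • x = ι a • x)

def restrict (f : IQ →ₗ[A'] N) : Q →ₗ[A] N where
  toFun q := f (emb q)
  map_add' := by simp
  map_smul' a q := by simp [hI.emb_smul, hsmul]

theorem restrict_ne_zero {f : IQ →ₗ[A'] N} (hf : f ≠ 0) : hI.restrict hsmul f ≠ 0 := by
  refine fun h => hf (LinearMap.ext fun x => ?_)
  rw [← hI.sum_coeff x, map_sum]
  exact sum_eq_zero fun γ _ => by
    rw [map_smul, show f (emb _) = hI.restrict hsmul f _ from rfl, h]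
    simp

end Restrict

section CrossedGenerators

variable {ψ : Γ →* RingAut A} (hA : CrossedGenerators ψ ι g)
include hA

theorem coeff_ι_smul (a : A) (x : IQ) (γ : Γ) :
    hI.coeff (ι a • x) γ = ψ γ⁻¹ a • hI.coeff x γ := by
  conv_lhs => rw [← hI.sum_coeff x]
  simp only [smul_sum, hA.ι_smul_g_smul, ← hI.emb_smul, hI.coeff_sum]

section Lift

variable {N : Type*} [AddCommGroup N] [Module A' N] [Module A N]
  (hsmul : ∀ (a : A) (x : N), a • x = ι a • x)

noncomputable def lift (φ : Q →ₗ[A] N) : IQ →ₗ[A'] N :=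
  hA.linearMap
    (AddMonoidHom.mk' (fun x => ∑ γ, (g γ : A') • φ (hI.coeff x γ)) fun x y => by
      simp only [map_add, Pi.add_apply, smul_add, sum_add_distrib])
    (fun a x => by
      simp only [AddMonoidHom.mk'_apply, hI.coeff_ι_smul hA, map_smul, hsmul, smul_sum,
        hA.ι_smul_g_smul])
    fun δ x => by
      simp only [AddMonoidHom.mk'_apply, hI.coeff_g_smul]
      exact sum_map_units_smul_mul g δ fun γ => φ (hI.coeff x γ)

theorem lift_apply (φ : Q →ₗ[A] N) (x : IQ) :
    hI.lift hA hsmul φ x = ∑ γ, (g γ : A') • φ (hI.coeff x γ) :=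
  rfl

theorem lift_emb (φ : Q →ₗ[A] N) (q : Q) : hI.lift hA hsmul φ (emb q) = φ q := by
  classical
  rw [lift_apply, coeff_emb]
  exact sum_map_units_smul_single g φ.toAddMonoidHom q

theorem lift_surjective [IsSimpleModule A' N] {φ : Q →ₗ[A] N} (hφ : φ ≠ 0) :
    Function.Surjective (hI.lift hA hsmul φ) := by
  obtain ⟨q, hq⟩ := DFunLike.ne_iff.mp hφ
  have hmem : φ q ∈ LinearMap.range (hI.lift hA hsmul φ) :=
    hI.lift_emb hA hsmul φ q ▸ LinearMap.mem_range_self _ (emb q)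
  refine LinearMap.range_eq_top.mp ((eq_bot_or_eq_top _).resolve_left fun h => hq ?_)
  simpa [h] using hmem

end Lift

theorem isSemisimpleModule_restrictScalars [Module A IQ]
    (hsmul : ∀ (a : A) (x : IQ), a • x = ι a • x) [IsSimpleModule A Q] :
    IsSemisimpleModule A IQ := by
  let embL : Q →ₗ[A] IQ :=
    { toFun := emb
      map_add' := emb.map_add
      map_smul' a q := by rw [hI.emb_smul, hsmul]; rfl }
  have hatom : IsAtom (LinearMap.range embL) := isSimpleModule_iff_isAtom.mp
    (.congr (LinearEquiv.ofInjective embL hI.emb_injective).symm)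
  refine isSemisimpleModule_of_isSemisimpleModule_submodule'
    (p := fun γ => Submodule.orderIsoMapComap (hA.smulEquiv hsmul γ) (LinearMap.range embL))
    (fun γ => ?_) (eq_top_iff.mpr fun x _ => ?_)
  · have := isSimpleModule_iff_isAtom.mpr
      (((Submodule.orderIsoMapComap (hA.smulEquiv hsmul γ)).isAtom_iff _).mpr hatom)
    infer_instance
  · rw [← hI.sum_coeff x]
    refine Submodule.sum_mem _ fun γ _ => Submodule.mem_iSup_of_mem γ ?_
    rw [Submodule.orderIsoMapComap_apply]
    exact Submodule.mem_map_of_mem (LinearMap.mem_range_self embL _)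

variable (m : Submodule A Q)

noncomputable def coeffSubmodule : Submodule A' IQ :=
  hA.toSubmodule ((AddSubgroup.pi Set.univ fun _ => m.toAddSubgroup).comap hI.coeff.toAddMonoidHom)
    (fun a x hx γ _ => by
      show hI.coeff (ι a • x) γ ∈ m
      rw [hI.coeff_ι_smul hA]
      exact m.smul_mem _ (hx γ trivial))
    fun δ x hx γ _ => by
      show hI.coeff ((g δ : A') • x) γ ∈ m
      rw [hI.coeff_g_smul]
      exact hx (δ⁻¹ * γ) trivial

theorem mem_coeffSubmodule {x : IQ} : x ∈ hI.coeffSubmodule hA m ↔ ∀ γ, hI.coeff x γ ∈ m := by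
  simp [coeffSubmodule, hA.mem_toSubmodule, AddSubgroup.mem_pi]

noncomputable def quotEmb : Q ⧸ m →+ IQ ⧸ hI.coeffSubmodule hA m :=
  QuotientAddGroup.map _ _ emb fun q hq => by
    classical
    refine (hI.mem_coeffSubmodule hA m).mpr fun γ => ?_
    rw [hI.coeff_emb]
    by_cases h : γ = 1
    · subst h; simpa using hq
    · simp [Pi.single_eq_of_ne h]

theorem quotEmb_mk (q : Q) :
    hI.quotEmb hA m (Submodule.Quotient.mk q) = Submodule.Quotient.mk (emb q) :=
  rfl

theorem mk_sum (c : Γ → Q) :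
    (Submodule.Quotient.mk (∑ γ, (g γ : A') • emb (c γ)) : IQ ⧸ hI.coeffSubmodule hA m) =
      ∑ γ, (g γ : A') • hI.quotEmb hA m (Submodule.Quotient.mk (c γ)) := by
  rw [← Submodule.mkQ_apply, map_sum]
  simp only [map_smul, Submodule.mkQ_apply, quotEmb_mk]

theorem isInduced_quotEmb : IsInduced ι g (hI.quotEmb hA m) where
  emb_smul a q := by
    obtain ⟨q, rfl⟩ := Submodule.Quotient.mk_surjective m q
    rw [← Submodule.Quotient.mk_smul, quotEmb_mk, quotEmb_mk, hI.emb_smul,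
      Submodule.Quotient.mk_smul]
  existsUnique_eq_sum x := by
    obtain ⟨y, rfl⟩ := Submodule.Quotient.mk_surjective _ x
    refine ⟨fun γ => Submodule.Quotient.mk (hI.coeff y γ), ?_, fun c hc => ?_⟩
    · beta_reduce
      conv_lhs => rw [← hI.sum_coeff y]
      exact hI.mk_sum hA m _
    · choose d hd using fun γ => Submodule.Quotient.mk_surjective m (c γ)
      obtain rfl : c = fun γ => Submodule.Quotient.mk (d γ) := funext fun γ => (hd γ).symm
      beta_reduce at hc
      rw [← hI.mk_sum, Submodule.Quotient.eq, hI.mem_coeffSubmodule, map_sub, hI.coeff_sum] at hc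
      funext γ
      exact (Submodule.Quotient.eq m).mpr (by simpa using m.neg_mem (hc γ))

end CrossedGenerators

end IsInduced

section Semisimple

variable {R M N : Type*} [Ring R] [AddCommGroup M] [Module R M] [AddCommGroup N] [Module R N]

theorem exists_isSimpleModule_quotient_ne_zero [IsSemisimpleModule R N] {f : M →ₗ[R] N}
    (hf : f ≠ 0) : ∃ m : Submodule R M, IsSimpleModule R (M ⧸ m) ∧ ∃ φ : M ⧸ m →ₗ[R] N, φ ≠ 0 := by
  obtain ⟨S, hS, hSf⟩ := (eq_bot_or_exists_atom_le (LinearMap.range f)).resolve_left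
    (LinearMap.range_eq_bot.not.mpr hf)
  obtain ⟨C, hC⟩ := exists_isCompl S
  have hsurj : Function.Surjective (S.projectionOnto C hC ∘ₗ f) := fun s => by
    obtain ⟨v, hv⟩ := hSf s.2
    exact ⟨v, by simp [hv]⟩
  have := isSimpleModule_iff_isAtom.mpr hS
  let e := LinearMap.quotKerEquivOfSurjective _ hsurj
  refine ⟨_, .congr e, S.subtype ∘ₗ e.toLinearMap, ?_⟩
  obtain ⟨s, hs, hs0⟩ := Submodule.exists_mem_ne_zero_of_ne_bot hS.1
  exact DFunLike.ne_iff.mpr ⟨e.symm ⟨s, hs⟩, by simpa using hs0⟩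

theorem exists_isCompl_linearEquiv_of_surjective [IsSemisimpleModule R M] {f : M →ₗ[R] N}
    (hf : Function.Surjective f) : ∃ P P' : Submodule R M, IsCompl P P' ∧ Nonempty (P ≃ₗ[R] N) := by
  obtain ⟨P, hP⟩ := exists_isCompl (LinearMap.ker f)
  exact ⟨P, _, hP.symm,
    ⟨(Submodule.quotientEquivOfIsCompl _ _ hP).symm ≪≫ₗ f.quotKerEquivOfSurjective hf⟩⟩

end Semisimple

theorem stmt13
    (A A' : Type u) [Ring A] [Ring A'] [Algebra ℂ A] [Algebra ℂ A']
    (Γ : Type u) [Group Γ] [Fintype Γ]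
    (ψ : Γ →* RingAut A) (ι : A →ₐ[ℂ] A') (g : Γ →* A'ˣ)
    (hrel : ∀ (γ : Γ) (a : A), (g γ : A') * ι a = ι (ψ γ a) * (g γ : A'))
    (hbasis : ∀ x : A', ∃! c : Γ → A, x = ∑ γ : Γ, ι (c γ) * (g γ : A'))
    -- any A-module V
    (V : Type u) [AddCommGroup V] [Module A V]
    -- the induced module Ind_A^{Γ⋉A} V, axiomatized
    (IV : Type u) [AddCommGroup IV] [Module A' IV]
    (emb : V →+ IV)
    (hembA : ∀ (a : A) (v : V), emb (a • v) = ι a • emb v)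
    (hIbasis : ∀ x : IV, ∃! c : Γ → V, x = ∑ γ : Γ, (g γ : A') • emb (c γ))
    -- an irreducible A'-module N
    (N : Type u) [AddCommGroup N] [Module A' N] (hN : IsSimpleModule A' N) :
    -- N is an irreducible quotient of Ind V iff N is an irreducible direct summand
    -- of Ind Q for some irreducible quotient Q = V/m of V
    (∃ f : IV →ₗ[A'] N, Function.Surjective f) ↔
    (∃ m : Submodule A V, IsSimpleModule A (V ⧸ m) ∧
      (∀ (IQ : Type u) [AddCommGroup IQ] [Module A' IQ] (embQ : (V ⧸ m) →+ IQ),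
        (∀ (a : A) (q : V ⧸ m), embQ (a • q) = ι a • embQ q) →
        (∀ x : IQ, ∃! c : Γ → (V ⧸ m), x = ∑ γ : Γ, (g γ : A') • embQ (c γ)) →
        ∃ (P P' : Submodule A' IQ), IsCompl P P' ∧ Nonempty (P ≃ₗ[A'] N))) := by
  have hA : CrossedGenerators ψ (ι : A →+* A') g := ⟨hrel, fun x => (hbasis x).exists⟩
  have hV : IsInduced (ι : A →+* A') g emb := ⟨hembA, hIbasis⟩
  have hΓ : IsUnit (Fintype.card Γ : A') := by
    simpa using (IsUnit.mk0 (Fintype.card Γ : ℂ) (by simp)).map (algebraMap ℂ A')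
  let _ : Module A N := Module.compHom N (ι : A →+* A')
  constructor
  · rintro ⟨f, hf⟩
    have : Nontrivial N := IsSimpleModule.nontrivial A' N
    have := hA.isSemisimpleModule_restrictScalars (M := N) fun _ _ => rfl
    obtain ⟨m, hm, φ, hφ⟩ := exists_isSimpleModule_quotient_ne_zero
      (hV.restrict_ne_zero (fun _ _ => rfl) (f := f) fun h => by
        obtain ⟨n, hn⟩ := exists_ne (0 : N)
        obtain ⟨x, rfl⟩ := hf n
        simp [h] at hn)
    refine ⟨m, hm, fun IQ _ _ embQ hembQ hIQ => ?_⟩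
    let _ : Module A IQ := Module.compHom IQ (ι : A →+* A')
    have hQ : IsInduced (ι : A →+* A') g embQ := ⟨hembQ, hIQ⟩
    have := hQ.isSemisimpleModule_restrictScalars hA fun _ _ => rfl
    have := hA.isSemisimpleModule_of_restrictScalars (M := IQ) (fun _ _ => rfl) hΓ
    exact exists_isCompl_linearEquiv_of_surjective (hQ.lift_surjective hA (fun _ _ => rfl) hφ)
  · rintro ⟨m, -, hall⟩
    have hQ := hV.isInduced_quotEmb hA m
    obtain ⟨P, P', hPP', ⟨e⟩⟩ := hall _ _ hQ.emb_smul hQ.existsUnique_eq_sum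
    exact ⟨e ∘ₗ P.projectionOnto P' hPP' ∘ₗ Submodule.mkQ _,
      e.surjective.comp
        ((Submodule.projectionOnto_surjective hPP').comp (Submodule.mkQ_surjective _))⟩
end
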